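/- arXiv:2602.16218 — 8 statements merged into one kernel-verified Lean document; each statement's English description precedes it below -/
import Mathlib

section
/- Suppose that k(·,x) is P-measurable for every x ∈ D, that ∫_D √(k(x,x)) dP(x) < ∞, and that the Gram matrix K_XX is positive definite. Then the Bayesian quadrature weight vector w = K_XX⁻¹ k_PX minimizes v ↦ e_k(v,X) over v ∈ ℝ^N, and the minimal squared worst-case error equals the Bayesian quadrature integral variance: min_{v ∈ ℝ^N} e_k(v,X)² = k_PP − wᵀ k_PX = Σ_D. -/
open MeasureTheory RealInnerProductSpace Matrix

/-- The worst-case integration error `e_k(v, X)` of weights `v` at nodes `x` in the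
Hilbert space of functions `H` (realised by the linear map `φ : H →ₗ[ℝ] (D → ℝ)`). -/
noncomputable def wce {D : Type*} [MeasurableSpace D]
    {H : Type*} [NormedAddCommGroup H] [InnerProductSpace ℝ H]
    (φ : H →ₗ[ℝ] (D → ℝ)) (P : MeasureTheory.Measure D)
    {N : ℕ} (x : Fin N → D) (v : Fin N → ℝ) : ℝ :=
  ⨆ g : {g : H // ‖g‖ ≤ 1}, |(∫ t, φ g.1 t ∂P) - ∑ i, v i * φ g.1 (x i)|

/-- The supremum of `|⟪g, h⟫|` over the unit ball equals `‖h‖`. -/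
lemma iSup_inner_abs {H : Type*} [NormedAddCommGroup H] [InnerProductSpace ℝ H] (h : H) :
    (⨆ g : {g : H // ‖g‖ ≤ 1}, |⟪(g : H), h⟫|) = ‖h‖ := by
  have hne : Nonempty {g : H // ‖g‖ ≤ 1} := ⟨⟨0, by simp⟩⟩
  have hbdd : ∀ g : {g : H // ‖g‖ ≤ 1}, |⟪(g : H), h⟫| ≤ ‖h‖ := by
    intro g
    calc |⟪(g : H), h⟫| ≤ ‖(g : H)‖ * ‖h‖ := abs_real_inner_le_norm _ _
      _ ≤ 1 * ‖h‖ := mul_le_mul_of_nonneg_right g.2 (norm_nonneg h)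
      _ = ‖h‖ := one_mul _
  refine le_antisymm (ciSup_le hbdd) ?_
  rcases eq_or_ne h 0 with rfl | hh
  · simp
  · have hn : ‖h‖ ≠ 0 := norm_ne_zero_iff.mpr hh
    have hg1 : ‖(‖h‖⁻¹ • h : H)‖ ≤ 1 := by
      rw [norm_smul, norm_inv, norm_norm, inv_mul_cancel₀ hn]
    have hval : |⟪((‖h‖⁻¹ • h : H)), h⟫| = ‖h‖ := by
      rw [real_inner_smul_left, real_inner_self_eq_norm_sq]
      rw [abs_of_nonneg (by positivity)]
      field_simp
    calc ‖h‖ = |⟪((⟨‖h‖⁻¹ • h, hg1⟩ : {g : H // ‖g‖ ≤ 1}) : H), h⟫| := hval.symm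
      _ ≤ ⨆ g : {g : H // ‖g‖ ≤ 1}, |⟪(g : H), h⟫| :=
        le_ciSup ⟨‖h‖, Set.forall_mem_range.mpr hbdd⟩ _

/-- Measurability of `t ↦ ⟪g, Kf t⟫` for all `g` in the Hilbert space. -/
lemma inner_Kf_aestronglyMeasurable {D : Type*} [MeasurableSpace D]
    {H : Type*} [NormedAddCommGroup H] [InnerProductSpace ℝ H] [CompleteSpace H]
    (φ : H →ₗ[ℝ] (D → ℝ)) (k : D → D → ℝ) (Kf : D → H)
    (hKf : ∀ x x' : D, φ (Kf x) x' = k x' x)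
    (hrepro : ∀ (g : H) (x : D), ⟪g, Kf x⟫ = φ g x)
    (P : Measure D)
    (hmeas : ∀ x : D, AEStronglyMeasurable (fun x' => k x' x) P)
    (g : H) : AEStronglyMeasurable (fun t => ⟪g, Kf t⟫) P := by
  set S : Submodule ℝ H := Submodule.span ℝ (Set.range Kf) with hS
  set T : Submodule ℝ H := S.topologicalClosure with hT
  have hKT : ∀ t : D, Kf t ∈ T :=
    fun t => Submodule.le_topologicalClosure S (Submodule.subset_span ⟨t, rfl⟩)
  have hspan : ∀ s ∈ S, AEStronglyMeasurable (fun t => ⟪s, Kf t⟫) P := by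
    intro s hs
    induction hs using Submodule.span_induction with
    | mem u hu =>
      obtain ⟨y, rfl⟩ := hu
      have : (fun t => ⟪Kf y, Kf t⟫) = fun t => k t y := by
        funext t; rw [hrepro, hKf]
      rw [this]; exact hmeas y
    | zero => simpa using aestronglyMeasurable_const (b := (0 : ℝ))
    | add a b _ _ ha hb => simp only [inner_add_left]; exact ha.add hb
    | smul c a _ ha => simpa [inner_smul_left] using ha.const_mul c
  -- decompose g using the orthogonal projection onto T
  set g₀ : H := (T.orthogonalProjectionOnto g : H) with hg₀
  have heq : (fun t => ⟪g, Kf t⟫) = fun t => ⟪g₀, Kf t⟫ := by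
    funext t
    have h0 : ⟪g - g₀, Kf t⟫ = 0 := T.starProjection_inner_eq_zero g (Kf t) (hKT t)
    have := inner_sub_left (𝕜 := ℝ) g g₀ (Kf t)
    rw [h0] at this
    linarith [this]
  rw [heq]
  have hclos : g₀ ∈ closure (S : Set H) := by
    have : g₀ ∈ T := SetLike.coe_mem _
    rw [← Submodule.topologicalClosure_coe]; exact this
  obtain ⟨u, hu_mem, hu_lim⟩ := mem_closure_iff_seq_limit.mp hclos
  refine aestronglyMeasurable_of_tendsto_ae Filter.atTop
    (fun n => hspan (u n) (hu_mem n)) ?_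
  filter_upwards with t
  exact hu_lim.inner tendsto_const_nhds

/-- Under the measurability and integrability conditions on the kernel and
positive definiteness of the Gram matrix, the Bayesian quadrature weights `w = K_XX⁻¹ k_PX`
minimise the worst-case error `v ↦ e_k(v, X)`, and the minimal squared worst-case error equals
the Bayesian quadrature integral variance `Σ_D = k_PP − wᵀ k_PX`. -/
theorem statement2
    {D : Type*} [MeasurableSpace D] [Nonempty D]
    {H : Type*} [NormedAddCommGroup H] [InnerProductSpace ℝ H] [CompleteSpace H]
    (φ : H →ₗ[ℝ] (D → ℝ)) (hφ : Function.Injective φ)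
    (k : D → D → ℝ) (Kf : D → H)
    (hKf : ∀ x x' : D, φ (Kf x) x' = k x' x)
    (hrepro : ∀ (g : H) (x : D), ⟪g, Kf x⟫ = φ g x)
    (P : Measure D) [IsProbabilityMeasure P]
    (hmeas : ∀ x : D, AEStronglyMeasurable (fun x' => k x' x) P)
    (hint : Integrable (fun x => Real.sqrt (k x x)) P)
    {N : ℕ} (x : Fin N → D) (hx : Function.Injective x)
    (hPD : (Matrix.of fun i j => k (x i) (x j)).PosDef)
    (w : Fin N → ℝ)
    (hw : w = ((Matrix.of fun i j => k (x i) (x j))⁻¹).mulVec fun i => ∫ t', k t' (x i) ∂P) :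
    (∀ v : Fin N → ℝ, wce φ P x w ≤ wce φ P x v) ∧
      wce φ P x w ^ 2
        = (∫ t, ∫ t', k t' t ∂P ∂P) - w ⬝ᵥ fun i => ∫ t', k t' (x i) ∂P := by
  -- norm of Kf t
  have hKfnorm : ∀ t : D, ‖Kf t‖ = Real.sqrt (k t t) := by
    intro t
    have : ⟪Kf t, Kf t⟫ = k t t := by rw [hrepro, hKf]
    rw [← Real.sqrt_sq (norm_nonneg (Kf t)), ← real_inner_self_eq_norm_sq, this]
  have hm : ∀ g : H, AEStronglyMeasurable (fun t => ⟪g, Kf t⟫) P :=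
    inner_Kf_aestronglyMeasurable φ k Kf hKf hrepro P hmeas
  have hI : ∀ g : H, Integrable (fun t => ⟪g, Kf t⟫) P := by
    intro g
    refine Integrable.mono' (hint.const_mul ‖g‖) (hm g) ?_
    filter_upwards with t
    calc ‖⟪g, Kf t⟫‖ = |⟪g, Kf t⟫| := rfl
      _ ≤ ‖g‖ * ‖Kf t‖ := abs_real_inner_le_norm _ _
      _ = ‖g‖ * Real.sqrt (k t t) := by rw [hKfnorm]
  -- the kernel mean embedding via Riesz representation
  set L : H →ₗ[ℝ] ℝ :=
    { toFun := fun g => ∫ t, ⟪g, Kf t⟫ ∂P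
      map_add' := fun a b => by
        simp only [inner_add_left]
        exact integral_add (hI a) (hI b)
      map_smul' := fun c a => by
        simp only [inner_smul_left, RingHom.id_apply, RCLike.ofReal_real_eq_id, id_eq]
        exact integral_const_mul c _ } with hL
  have hLb : ∀ g : H, ‖L g‖ ≤ (∫ t, Real.sqrt (k t t) ∂P) * ‖g‖ := by
    intro g
    have h1 : ‖L g‖ ≤ ∫ t, ‖⟪g, Kf t⟫‖ ∂P := norm_integral_le_integral_norm _
    have h2 : (∫ t, ‖⟪g, Kf t⟫‖ ∂P) ≤ ∫ t, ‖g‖ * Real.sqrt (k t t) ∂P := by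
      refine integral_mono (hI g).norm (hint.const_mul ‖g‖) ?_
      intro t
      calc ‖⟪g, Kf t⟫‖ ≤ ‖g‖ * ‖Kf t‖ := abs_real_inner_le_norm _ _
        _ = ‖g‖ * Real.sqrt (k t t) := by rw [hKfnorm]
    calc ‖L g‖ ≤ ∫ t, ‖g‖ * Real.sqrt (k t t) ∂P := h1.trans h2
      _ = ‖g‖ * ∫ t, Real.sqrt (k t t) ∂P := integral_const_mul _ _
      _ = (∫ t, Real.sqrt (k t t) ∂P) * ‖g‖ := mul_comm _ _
  set Lc : H →L[ℝ] ℝ := L.mkContinuous _ hLb with hLc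
  set μ : H := (InnerProductSpace.toDual ℝ H).symm Lc with hμdef
  have hμ : ∀ g : H, ⟪μ, g⟫ = ∫ t, ⟪g, Kf t⟫ ∂P := by
    intro g
    rw [hμdef]
    exact InnerProductSpace.toDual_symm_apply
  -- wce as a norm
  have hwce : ∀ v : Fin N → ℝ, wce φ P x v = ‖μ - ∑ i, v i • Kf (x i)‖ := by
    intro v
    have key : ∀ g : H, (∫ t, φ g t ∂P) - ∑ i, v i * φ g (x i)
        = ⟪g, μ - ∑ i, v i • Kf (x i)⟫ := by
      intro g
      rw [inner_sub_right, inner_sum]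
      congr 1
      · rw [real_inner_comm, hμ]
        congr 1
        funext t
        rw [hrepro]
      · refine Finset.sum_congr rfl fun i _ => ?_
        rw [real_inner_smul_right, hrepro]
    unfold wce
    simp_rw [key]
    exact iSup_inner_abs _
  -- notation
  set K : Matrix (Fin N) (Fin N) ℝ := Matrix.of fun i j => k (x i) (x j) with hK
  set b : Fin N → ℝ := fun i => ∫ t', k t' (x i) ∂P with hb
  have hμKf : ∀ j, ⟪μ, Kf (x j)⟫ = b j := by
    intro j
    rw [hμ]
    congr 1
    funext t
    rw [hrepro, hKf]
  have hKw : K.mulVec w = b := by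
    rw [hw, Matrix.mulVec_mulVec, Matrix.mul_nonsing_inv _ (isUnit_iff_ne_zero.mpr hPD.det_pos.ne'),
      Matrix.one_mulVec]
  -- orthogonality of the residual η
  set η : H := μ - ∑ i, w i • Kf (x i) with hη
  have horth : ∀ j, ⟪η, Kf (x j)⟫ = 0 := by
    intro j
    rw [hη, inner_sub_left, sum_inner, hμKf]
    have hsum : ∑ i, ⟪w i • Kf (x i), Kf (x j)⟫ = (K.mulVec w) j := by
      rw [Matrix.mulVec]
      simp only [dotProduct, hK, Matrix.of_apply]
      refine Finset.sum_congr rfl fun i _ => ?_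
      rw [real_inner_smul_left, hrepro, hKf, mul_comm]
    rw [hsum, hKw, sub_self]
  -- minimality
  have hmin : ∀ v : Fin N → ℝ, wce φ P x w ≤ wce φ P x v := by
    intro v
    rw [hwce, hwce]
    set d : H := ∑ i, (w i - v i) • Kf (x i) with hd
    have hdec : μ - ∑ i, v i • Kf (x i) = η + d := by
      rw [hη, hd]
      have : ∑ i, (w i - v i) • Kf (x i)
          = ∑ i, w i • Kf (x i) - ∑ i, v i • Kf (x i) := by
        rw [← Finset.sum_sub_distrib]
        simp_rw [sub_smul]
      rw [this]
      abel
    have hηd : ⟪η, d⟫ = 0 := by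
      rw [hd, inner_sum]
      refine Finset.sum_eq_zero fun i _ => ?_
      rw [real_inner_smul_right, horth, mul_zero]
    have hsq : ‖η + d‖ ^ 2 = ‖η‖ ^ 2 + ‖d‖ ^ 2 := by
      rw [norm_add_sq_real, hηd]; ring
    rw [hdec]
    nlinarith [norm_nonneg (η + d), norm_nonneg η, sq_nonneg ‖d‖]
  refine ⟨hmin, ?_⟩
  -- value of minimal squared error
  have hμμ : ⟪μ, μ⟫ = ∫ t, ∫ t', k t' t ∂P ∂P := by
    rw [hμ]
    congr 1
    funext t
    rw [hμ]
    congr 1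
    funext t'
    rw [hrepro, hKf]
  have hval : ‖η‖ ^ 2 = (∫ t, ∫ t', k t' t ∂P ∂P) - w ⬝ᵥ b := by
    have h1 : ⟪η, η⟫ = ⟪η, μ⟫ := by
      rw [hη]
      nth_rewrite 1 [inner_sub_right]
      rw [inner_sum]
      have : ∑ i, ⟪η, w i • Kf (x i)⟫ = 0 := by
        refine Finset.sum_eq_zero fun i _ => ?_
        rw [real_inner_smul_right, horth, mul_zero]
      rw [this, sub_zero]
    have h2 : ⟪η, μ⟫ = (∫ t, ∫ t', k t' t ∂P ∂P) - w ⬝ᵥ b := by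
      rw [hη, inner_sub_left, real_inner_comm μ μ] at *
      rw [hμμ]
      congr 1
      rw [sum_inner, dotProduct]
      refine Finset.sum_congr rfl fun i _ => ?_
      rw [real_inner_smul_left, real_inner_comm, hμKf]
    rw [← real_inner_self_eq_norm_sq, h1, h2]
  rw [hwce, ← hη, hval]
end

section
/- Let P be the uniform (Lebesgue) measure on D = [0,1] and let k(x,x') = min{x,x'} be the Brownian motion covariance. Let 0 < x_1 < ⋯ < x_{N−1} < x_N = 1 and set x_0 = 0. If f : [0,1] → ℝ satisfies f(0) = 0, then the Gram matrix K_XX = (min{x_i,x_j})_{i,j=1}^N is positive definite, and the Bayesian quadrature mean μ_D = k_PXᵀ K_XX⁻¹ f_X equals the trapezoidal rule: μ_D = Σ_{i=1}^N [(f(x_i) + f(x_{i−1}))/2] · (x_i − x_{i−1}). -/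
open MeasureTheory Matrix

section Statement4Aux

lemma integral_min_aux {c : ℝ} (h0 : 0 ≤ c) (h1 : c ≤ 1) :
    ∫ t in Set.Icc (0:ℝ) 1, min t c = c - c^2/2 := by
  have hcont : Continuous fun t : ℝ => min t c := continuous_id.min continuous_const
  rw [MeasureTheory.integral_Icc_eq_integral_Ioc,
    ← intervalIntegral.integral_of_le (by norm_num : (0:ℝ) ≤ 1)]
  have hsplit := intervalIntegral.integral_add_adjacent_intervals
    (a := 0) (b := c) (c := 1) (f := fun t => min t c)
    (hcont.intervalIntegrable (μ := volume) 0 c) (hcont.intervalIntegrable (μ := volume) c 1)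
  rw [← hsplit]
  have h2 : (∫ t in (0:ℝ)..c, min t c) = ∫ t in (0:ℝ)..c, t := by
    refine intervalIntegral.integral_congr fun t ht => ?_
    rw [Set.uIcc_of_le h0] at ht
    exact min_eq_left ht.2
  have h3 : (∫ t in c..(1:ℝ), min t c) = ∫ t in c..(1:ℝ), c := by
    refine intervalIntegral.integral_congr fun t ht => ?_
    rw [Set.uIcc_of_le h1] at ht
    exact min_eq_right ht.1
  rw [h2, h3, integral_id, intervalIntegral.integral_const]
  rw [smul_eq_mul]; ring

variable {N : ℕ} {x : ℕ → ℝ}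

lemma xmono_aux (hmono : ∀ i < N, x i < x (i + 1)) :
    ∀ i j, i ≤ j → j ≤ N → x i ≤ x j := by
  intro i j hij hjN
  induction j with
  | zero => simp [Nat.le_zero.mp hij]
  | succ n ih =>
    rcases Nat.lt_or_ge i (n+1) with h | h
    · exact le_trans (ih (Nat.lt_succ_iff.mp h) (le_trans (Nat.le_succ n) hjN))
        (le_of_lt (hmono n (Nat.lt_of_succ_le hjN)))
    · have : i = n + 1 := le_antisymm hij h
      simp [this]

lemma key_sum_aux (hx0 : x 0 = 0)
    (hmono : ∀ i < N, x i < x (i + 1)) (hxN : x N = 1)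
    (i : ℕ) (hi : i < N) :
    ∑ j ∈ Finset.range N,
      min (x (i+1)) (x (j+1)) * ((x (min (j+2) N) - x (min j N))/2)
      = x (i+1) - (x (i+1))^2/2 := by
  set y : ℕ → ℝ := fun m => x (min m N) with hy
  have hyle : ∀ m, m ≤ N → y m = x m := fun m hm => by simp [hy, min_eq_left hm]
  have hmle : ∀ i j, i ≤ j → j ≤ N → x i ≤ x j := xmono_aux hmono
  have h1 : ∀ j ∈ Finset.range (i+1),
      min (x (i+1)) (x (j+1)) * ((y (j+2) - y j)/2)
        = y (j+1) * y (j+1+1) / 2 - y j * y (j+1) / 2 := by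
    intro j hj
    have hji : j + 1 ≤ i + 1 := Nat.succ_le_succ (Nat.lt_succ_iff.mp (Finset.mem_range.mp hj))
    have hmin : min (x (i+1)) (x (j+1)) = x (j+1) :=
      min_eq_right (hmle _ _ hji hi)
    rw [hmin, ← hyle (j+1) (le_trans hji hi)]
    ring
  have h2 : ∀ j ∈ Finset.Ico (i+1) N,
      min (x (i+1)) (x (j+1)) * ((y (j+2) - y j)/2)
        = (x (i+1) * (y (j+1) + y (j+1+1)) / 2) - (x (i+1) * (y j + y (j+1)) / 2) := by
    intro j hj
    obtain ⟨hj1, hj2⟩ := Finset.mem_Ico.mp hj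
    have hmin : min (x (i+1)) (x (j+1)) = x (i+1) :=
      min_eq_left (hmle (i+1) (j+1) (by omega) (by omega))
    rw [hmin]; ring
  rw [← Finset.sum_range_add_sum_Ico _ hi, Finset.sum_congr rfl h1, Finset.sum_congr rfl h2,
    Finset.sum_range_sub (fun j => y j * y (j+1) / 2),
    Finset.sum_Ico_eq_sub _ hi,
    Finset.sum_range_sub (fun j => x (i+1) * (y j + y (j+1)) / 2),
    Finset.sum_range_sub (fun j => x (i+1) * (y j + y (j+1)) / 2)]
  have hy0 : y 0 = 0 := by rw [hyle 0 (Nat.zero_le N), hx0]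
  have hyN : y N = 1 := by rw [hyle N le_rfl, hxN]
  have hyN1 : y (N+1) = 1 := by simp [hy, min_eq_right (Nat.le_succ N), hxN]
  have hyi : y (i+1) = x (i+1) := hyle _ hi
  rw [hy0, hyN, hyN1, hyi]
  ring

lemma gram_posdef_aux (hx0 : x 0 = 0)
    (hmono : ∀ i < N, x i < x (i + 1)) :
    (Matrix.of fun i j : Fin N => min (x (i.1 + 1)) (x (j.1 + 1))).PosDef := by
  classical
  set d : Fin N → ℝ := fun k => x (k.1+1) - x k.1 with hd
  have hdpos : ∀ k : Fin N, 0 < d k := fun k => sub_pos.mpr (hmono k.1 k.2)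
  set L : Matrix (Fin N) (Fin N) ℝ :=
    Matrix.of (fun k i : Fin N => if k ≤ i then Real.sqrt (d k) else 0) with hL
  have hfact : (Matrix.of fun i j : Fin N => min (x (i.1 + 1)) (x (j.1 + 1))) = Lᵀ * L := by
    ext i j
    simp only [Matrix.mul_apply, Matrix.transpose_apply, hL, Matrix.of_apply]
    have hterm : ∀ k : Fin N,
        (if k ≤ i then Real.sqrt (d k) else 0) * (if k ≤ j then Real.sqrt (d k) else 0)
          = if k.1 < min i.1 j.1 + 1 then x (k.1+1) - x k.1 else 0 := by
      intro k
      by_cases h : (k:ℕ) < min i.1 j.1 + 1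
      · rw [if_pos (Fin.le_def.mpr (by omega)), if_pos (Fin.le_def.mpr (by omega)),
          Real.mul_self_sqrt (hdpos k).le, if_pos h]
      · rw [if_neg h]
        have h' : ¬ k ≤ i ∨ ¬ k ≤ j := by
          simp only [Fin.le_def, not_le]; omega
        rcases h' with h' | h'
        · rw [if_neg h', zero_mul]
        · rw [if_neg h', mul_zero]
    rw [Finset.sum_congr rfl (fun k _ => hterm k),
      Fin.sum_univ_eq_sum_range (fun k => if k < min i.1 j.1 + 1 then x (k+1) - x k else 0) N,
      ← Finset.sum_filter]
    have hr : (Finset.range N).filter (fun k => k < min i.1 j.1 + 1)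
        = Finset.range (min i.1 j.1 + 1) := by
      ext a
      simp only [Finset.mem_filter, Finset.mem_range]
      have := min_le_left i.1 j.1
      have := i.2
      omega
    rw [hr, Finset.sum_range_sub x, hx0, sub_zero]
    rcases le_total i.1 j.1 with h | h
    · rw [min_eq_left h, min_eq_left (xmono_aux hmono (i.1+1) (j.1+1) (by omega) (by omega))]
    · rw [min_eq_right h, min_eq_right (xmono_aux hmono (j.1+1) (i.1+1) (by omega) (by omega))]
  have hLdet : IsUnit L := by
    rw [Matrix.isUnit_iff_isUnit_det]
    have htri : L.BlockTriangular id := by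
      intro k i h
      exact if_neg (not_le.mpr h)
    rw [Matrix.det_of_upperTriangular htri]
    refine isUnit_iff_ne_zero.mpr (Finset.prod_ne_zero_iff.mpr fun k _ => ?_)
    simp only [hL, Matrix.of_apply, if_pos (le_refl k)]
    exact (Real.sqrt_pos.mpr (hdpos k)).ne'
  rw [Matrix.posDef_iff_dotProduct_mulVec]
  constructor
  · show _ᴴ = _
    ext i j
    simp [Matrix.conjTranspose_apply, min_comm]
  · intro v hv
    rw [hfact, star_trivial, ← Matrix.mulVec_mulVec, Matrix.dotProduct_mulVec,
      Matrix.vecMul_transpose]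
    have hLv : L *ᵥ v ≠ 0 := fun h =>
      hv (Matrix.mulVec_injective_iff_isUnit.mpr hLdet (h.trans (Matrix.mulVec_zero L).symm))
    obtain ⟨i, hi⟩ := Function.ne_iff.mp hLv
    have hne : (L *ᵥ v) i ≠ 0 := by simpa using hi
    simp only [dotProduct]
    exact Finset.sum_pos' (fun k _ => mul_self_nonneg _)
      ⟨i, Finset.mem_univ i, mul_self_pos.mpr hne⟩

end Statement4Aux

/-- Let `P` be the uniform (Lebesgue) measure on `[0,1]` and
`k(x,x') = min{x,x'}` the Brownian motion covariance.  For nodes `0 = x_0 < x_1 < ⋯ < x_N = 1`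
and `f` with `f 0 = 0`, the Gram matrix `(min{x_i,x_j})_{i,j=1}^N` is positive definite and the
Bayesian quadrature mean `μ_D = k_PXᵀ K_XX⁻¹ f_X` equals the trapezoidal rule
`Σ_{i=1}^N ((f(x_i) + f(x_{i−1}))/2) (x_i − x_{i−1})`. -/
theorem statement4
    {N : ℕ} (hN : 0 < N) (x : ℕ → ℝ) (hx0 : x 0 = 0)
    (hmono : ∀ i < N, x i < x (i + 1)) (hxN : x N = 1)
    (f : ℝ → ℝ) (hf0 : f 0 = 0) :
    (Matrix.of fun i j : Fin N => min (x (i.1 + 1)) (x (j.1 + 1))).PosDef ∧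
      ((fun i : Fin N => ∫ t in Set.Icc (0:ℝ) 1, min t (x (i.1 + 1)))
          ⬝ᵥ ((Matrix.of fun i j : Fin N => min (x (i.1 + 1)) (x (j.1 + 1)))⁻¹).mulVec
            (fun i : Fin N => f (x (i.1 + 1))))
        = ∑ i ∈ Finset.range N, (f (x (i + 1)) + f (x i)) / 2 * (x (i + 1) - x i) := by
  classical
  have hmle : ∀ i j, i ≤ j → j ≤ N → x i ≤ x j := xmono_aux hmono
  have hPD := gram_posdef_aux (N := N) (x := x) hx0 hmono
  refine ⟨hPD, ?_⟩
  set K : Matrix (Fin N) (Fin N) ℝ :=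
    Matrix.of fun i j : Fin N => min (x (i.1 + 1)) (x (j.1 + 1)) with hK
  set fX : Fin N → ℝ := fun i => f (x (i.1 + 1)) with hfX
  set w : Fin N → ℝ := fun j => (x (min (j.1+2) N) - x (min j.1 N))/2 with hw
  -- the integral vector equals K *ᵥ w
  have hkP : (fun i : Fin N => ∫ t in Set.Icc (0:ℝ) 1, min t (x (i.1 + 1))) = K *ᵥ w := by
    funext i
    have hc0 : 0 ≤ x (i.1 + 1) := hx0 ▸ hmle 0 (i.1+1) (Nat.zero_le _) i.2
    have hc1 : x (i.1 + 1) ≤ 1 := hxN ▸ hmle (i.1+1) N i.2 le_rfl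
    rw [integral_min_aux hc0 hc1]
    have hmv : (K *ᵥ w) i = ∑ j ∈ Finset.range N,
        min (x (i.1+1)) (x (j+1)) * ((x (min (j+2) N) - x (min j N))/2) := by
      simp only [Matrix.mulVec, dotProduct]
      exact Fin.sum_univ_eq_sum_range
        (fun j => min (x (i.1+1)) (x (j+1)) * ((x (min (j+2) N) - x (min j N))/2)) N
    rw [hmv, key_sum_aux hx0 hmono hxN i.1 i.2]
  rw [hkP]
  -- reduce to w ⬝ᵥ fX
  have hKsymm : Kᵀ = K := by
    ext i j; simp [hK, min_comm]
  have hinv : K * K⁻¹ = 1 := Matrix.mul_nonsing_inv K ((Matrix.isUnit_iff_isUnit_det K).mp hPD.isUnit)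
  have hstep : (K *ᵥ w) ⬝ᵥ (K⁻¹ *ᵥ fX) = w ⬝ᵥ fX := by
    rw [← Matrix.vecMul_transpose, hKsymm, ← Matrix.dotProduct_mulVec,
      Matrix.mulVec_mulVec, hinv, Matrix.one_mulVec]
  rw [hstep]
  -- now evaluate w ⬝ᵥ fX as the trapezoidal sum
  obtain ⟨M, rfl⟩ : ∃ M, N = M + 1 := ⟨N-1, by omega⟩
  rw [dotProduct]
  rw [Fin.sum_univ_eq_sum_range
    (fun j => (x (min (j+2) (M+1)) - x (min j (M+1)))/2 * f (x (j+1))) (M+1)]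
  have hsplit : ∀ j ∈ Finset.range (M+1),
      (x (min (j+2) (M+1)) - x (min j (M+1)))/2 * f (x (j+1))
        = (x (min (j+2) (M+1)) - x (j+1))/2 * f (x (j+1))
          + f (x (j+1)) * (x (j+1) - x j) / 2 := by
    intro j hj
    have hj' := Finset.mem_range.mp hj
    rw [min_eq_left (by omega : j ≤ M+1)]
    ring
  have hRHS : ∀ i ∈ Finset.range (M+1),
      (f (x (i+1)) + f (x i))/2 * (x (i+1) - x i)
        = f (x (i+1)) * (x (i+1) - x i) / 2 + f (x i) * (x (i+1) - x i) / 2 := by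
    intro i _; ring
  rw [Finset.sum_congr rfl hsplit, Finset.sum_add_distrib,
    Finset.sum_congr rfl hRHS, Finset.sum_add_distrib]
  have h1 : ∑ j ∈ Finset.range (M+1), f (x (j+1)) * (x (j+1) - x j) / 2
      = ∑ i ∈ Finset.range (M+1), f (x (i+1)) * (x (i+1) - x i) / 2 := rfl
  have h2 : ∑ j ∈ Finset.range (M+1),
        (x (min (j+2) (M+1)) - x (j+1))/2 * f (x (j+1))
      = ∑ i ∈ Finset.range (M+1), f (x i) * (x (i+1) - x i) / 2 := by
    have hB : ∑ j ∈ Finset.range (M+1),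
        (x (min (j+2) (M+1)) - x (j+1))/2 * f (x (j+1))
          = ∑ j ∈ Finset.range M, (x (j+2) - x (j+1))/2 * f (x (j+1)) := by
      rw [Finset.sum_range_succ, min_eq_right (by omega : M+1 ≤ M+2), sub_self, zero_div,
        zero_mul, add_zero]
      exact Finset.sum_congr rfl fun j hj => by
        rw [min_eq_left (by have := Finset.mem_range.mp hj; omega : j+2 ≤ M+1)]
    have hD : ∑ i ∈ Finset.range (M+1), f (x i) * (x (i+1) - x i) / 2
        = ∑ i ∈ Finset.range M, f (x (i+1)) * (x (i+1+1) - x (i+1)) / 2 := by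
      rw [Finset.sum_range_succ' (fun i => f (x i) * (x (i+1) - x i) / 2) M]
      simp [hx0, hf0]
    rw [hB, hD]
    exact Finset.sum_congr rfl fun j _ => by ring
  rw [h1, h2, add_comm]
end

section
/- Suppose that k(·,x) is P-measurable for every x ∈ D and ∫_D √(k(x,x)) dP(x) < ∞. Let X = {x_1,…,x_N} ⊆ X' = {x_1,…,x_{N'}} be pairwise distinct nodes (N' ≥ N) with positive definite Gram matrices K_XX and K_X'X'. Then the Bayesian quadrature integral variances satisfy Σ_{D'} ≤ Σ_D, i.e., k_PP − k_PX'ᵀ K_X'X'⁻¹ k_PX' ≤ k_PP − k_PXᵀ K_XX⁻¹ k_PX. -/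
open MeasureTheory RealInnerProductSpace Matrix

theorem quad_bound {n : ℕ} (M : Matrix (Fin n) (Fin n) ℝ) (hM : M.PosDef)
    (v c : Fin n → ℝ) :
    2 * (c ⬝ᵥ v) - c ⬝ᵥ M.mulVec c ≤ v ⬝ᵥ M⁻¹.mulVec v := by
  have hdet : IsUnit M.det := isUnit_iff_ne_zero.2 (ne_of_gt hM.det_pos)
  have hMinv : M * M⁻¹ = 1 := Matrix.mul_nonsing_inv M hdet
  have hvec : ∀ w : Fin n → ℝ, M.vecMul w = M.mulVec w := by
    intro w; conv_lhs => rw [← hM.1]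
    exact Matrix.vecMul_transpose M w
  set d : Fin n → ℝ := c - M⁻¹.mulVec v with hd
  have hpos : 0 ≤ d ⬝ᵥ M.mulVec d := by
    have := hM.posSemidef.dotProduct_mulVec_nonneg d
    simpa using this
  have hMd : M.mulVec d = M.mulVec c - v := by
    rw [hd, Matrix.mulVec_sub, Matrix.mulVec_mulVec, hMinv, Matrix.one_mulVec]
  have h1 : (M⁻¹.mulVec v) ⬝ᵥ M.mulVec c = v ⬝ᵥ c := by
    rw [Matrix.dotProduct_mulVec, hvec, Matrix.mulVec_mulVec, hMinv, Matrix.one_mulVec]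
  have h2 : (M⁻¹.mulVec v) ⬝ᵥ v = v ⬝ᵥ M⁻¹.mulVec v := dotProduct_comm _ _
  have hexp : d ⬝ᵥ M.mulVec d
      = c ⬝ᵥ M.mulVec c - 2 * (c ⬝ᵥ v) + v ⬝ᵥ M⁻¹.mulVec v := by
    rw [hMd, hd]
    simp only [sub_dotProduct, dotProduct_sub, h1, h2]
    have := dotProduct_comm c v
    ring_nf
    rw [dotProduct_comm v c]
    ring
  linarith [hpos, hexp]

theorem pad_dot {N N' : ℕ} (hNN : N ≤ N') (c₀ : Fin N → ℝ) (g : Fin N' → ℝ) :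
    (fun i : Fin N' => if h : (i : ℕ) < N then c₀ ⟨i, h⟩ else 0) ⬝ᵥ g
      = c₀ ⬝ᵥ (fun j => g (Fin.castLE hNN j)) := by
  classical
  set F : ℕ → ℝ := fun m =>
    if h : m < N then c₀ ⟨m, h⟩ * g ⟨m, lt_of_lt_of_le h hNN⟩ else 0 with hF
  have hL : (fun i : Fin N' => if h : (i : ℕ) < N then c₀ ⟨i, h⟩ else 0) ⬝ᵥ g
      = ∑ m ∈ Finset.range N', F m := by
    rw [← Fin.sum_univ_eq_sum_range F N', dotProduct]
    refine Finset.sum_congr rfl fun i _ => ?_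
    by_cases h : (i : ℕ) < N <;> simp [hF, h]
  have hR : c₀ ⬝ᵥ (fun j => g (Fin.castLE hNN j)) = ∑ m ∈ Finset.range N, F m := by
    rw [← Fin.sum_univ_eq_sum_range F N, dotProduct]
    refine Finset.sum_congr rfl fun j _ => ?_
    simp [hF, j.isLt, Fin.castLE]
  rw [hL, hR]
  refine (Finset.sum_subset (Finset.range_subset_range.2 hNN) ?_).symm
  intro m _ hm
  rw [Finset.mem_range] at hm
  simp [hF, hm]

open MeasureTheory RealInnerProductSpace in
theorem statement6'
    {D : Type*} [MeasurableSpace D] [Nonempty D]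
    (k : D → D → ℝ)
    (P : Measure D) [IsProbabilityMeasure P]
    {N N' : ℕ} (hNN : N ≤ N') (x : Fin N' → D)
    (hPD : (Matrix.of fun i j : Fin N =>
        k (x (Fin.castLE hNN i)) (x (Fin.castLE hNN j))).PosDef)
    (hPD' : (Matrix.of fun i j : Fin N' => k (x i) (x j)).PosDef) :
    (∫ t, ∫ t', k t' t ∂P ∂P)
        - ((fun i : Fin N' => ∫ t', k t' (x i) ∂P)
            ⬝ᵥ ((Matrix.of fun i j : Fin N' => k (x i) (x j))⁻¹).mulVec
              (fun i : Fin N' => ∫ t', k t' (x i) ∂P))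
      ≤ (∫ t, ∫ t', k t' t ∂P ∂P)
        - ((fun i : Fin N => ∫ t', k t' (x (Fin.castLE hNN i)) ∂P)
            ⬝ᵥ ((Matrix.of fun i j : Fin N =>
                k (x (Fin.castLE hNN i)) (x (Fin.castLE hNN j)))⁻¹).mulVec
              (fun i : Fin N => ∫ t', k t' (x (Fin.castLE hNN i)) ∂P)) := by
  set A : Matrix (Fin N') (Fin N') ℝ := Matrix.of fun i j => k (x i) (x j) with hA
  set A₀ : Matrix (Fin N) (Fin N) ℝ :=
    Matrix.of fun i j => k (x (Fin.castLE hNN i)) (x (Fin.castLE hNN j)) with hA₀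
  set b : Fin N' → ℝ := fun i => ∫ t', k t' (x i) ∂P with hb
  set b₀ : Fin N → ℝ := fun i => ∫ t', k t' (x (Fin.castLE hNN i)) ∂P with hb₀
  apply sub_le_sub_left
  set c₀ : Fin N → ℝ := A₀⁻¹.mulVec b₀ with hc₀
  set c : Fin N' → ℝ := fun i => if h : (i : ℕ) < N then c₀ ⟨i, h⟩ else 0 with hc
  have hdet₀ : IsUnit A₀.det := isUnit_iff_ne_zero.2 (ne_of_gt hPD.det_pos)
  have hA₀inv : A₀ * A₀⁻¹ = 1 := Matrix.mul_nonsing_inv A₀ hdet₀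
  have hcb : c ⬝ᵥ b = c₀ ⬝ᵥ b₀ := pad_dot hNN c₀ b
  have hcAc : c ⬝ᵥ A.mulVec c = c₀ ⬝ᵥ b₀ := by
    have h1 : c ⬝ᵥ A.mulVec c = c₀ ⬝ᵥ fun j => A.mulVec c (Fin.castLE hNN j) :=
      pad_dot hNN c₀ (A.mulVec c)
    have h2 : ∀ j : Fin N, A.mulVec c (Fin.castLE hNN j) = A₀.mulVec c₀ j := by
      intro j
      have h3 : c ⬝ᵥ (fun i => A (Fin.castLE hNN j) i)
          = c₀ ⬝ᵥ fun j' => A (Fin.castLE hNN j) (Fin.castLE hNN j') :=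
        pad_dot hNN c₀ _
      calc A.mulVec c (Fin.castLE hNN j)
          = c ⬝ᵥ (fun i => A (Fin.castLE hNN j) i) := dotProduct_comm _ _
        _ = c₀ ⬝ᵥ fun j' => A₀ j j' := h3
        _ = A₀.mulVec c₀ j := dotProduct_comm _ _
    rw [h1]
    have : (fun j => A.mulVec c (Fin.castLE hNN j)) = A₀.mulVec c₀ := funext h2
    rw [this, hc₀, Matrix.mulVec_mulVec, hA₀inv, Matrix.one_mulVec]
  have hkey : b₀ ⬝ᵥ A₀⁻¹.mulVec b₀ ≤ b ⬝ᵥ A⁻¹.mulVec b := by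
    have := quad_bound A hPD' b c
    rw [hcb, hcAc] at this
    calc b₀ ⬝ᵥ A₀⁻¹.mulVec b₀ = c₀ ⬝ᵥ b₀ := dotProduct_comm _ _
      _ = 2 * (c₀ ⬝ᵥ b₀) - c₀ ⬝ᵥ b₀ := by ring
      _ ≤ b ⬝ᵥ A⁻¹.mulVec b := this
  exact hkey

/-- Under the measurability and integrability conditions on the kernel, if the
node set `X = {x_1,…,x_N}` is contained in `X' = {x_1,…,x_{N'}}` (`N ≤ N'`), both with positive
definite Gram matrices, then the Bayesian quadrature integral variances satisfy `Σ_{D'} ≤ Σ_D`,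
i.e. `k_PP − k_PX'ᵀ K_X'X'⁻¹ k_PX' ≤ k_PP − k_PXᵀ K_XX⁻¹ k_PX`. -/
theorem statement6
    {D : Type*} [MeasurableSpace D] [Nonempty D]
    {H : Type*} [NormedAddCommGroup H] [InnerProductSpace ℝ H] [CompleteSpace H]
    (φ : H →ₗ[ℝ] (D → ℝ)) (hφ : Function.Injective φ)
    (k : D → D → ℝ) (Kf : D → H)
    (hKf : ∀ x x' : D, φ (Kf x) x' = k x' x)
    (hrepro : ∀ (g : H) (x : D), ⟪g, Kf x⟫ = φ g x)
    (P : Measure D) [IsProbabilityMeasure P]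
    (hmeas : ∀ x : D, AEStronglyMeasurable (fun x' => k x' x) P)
    (hint : Integrable (fun x => Real.sqrt (k x x)) P)
    {N N' : ℕ} (hNN : N ≤ N') (x : Fin N' → D) (hx : Function.Injective x)
    (hPD : (Matrix.of fun i j : Fin N =>
        k (x (Fin.castLE hNN i)) (x (Fin.castLE hNN j))).PosDef)
    (hPD' : (Matrix.of fun i j : Fin N' => k (x i) (x j)).PosDef) :
    (∫ t, ∫ t', k t' t ∂P ∂P)
        - ((fun i : Fin N' => ∫ t', k t' (x i) ∂P)
            ⬝ᵥ ((Matrix.of fun i j : Fin N' => k (x i) (x j))⁻¹).mulVec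
              (fun i : Fin N' => ∫ t', k t' (x i) ∂P))
      ≤ (∫ t, ∫ t', k t' t ∂P ∂P)
        - ((fun i : Fin N => ∫ t', k t' (x (Fin.castLE hNN i)) ∂P)
            ⬝ᵥ ((Matrix.of fun i j : Fin N =>
                k (x (Fin.castLE hNN i)) (x (Fin.castLE hNN j)))⁻¹).mulVec
              (fun i : Fin N => ∫ t', k t' (x (Fin.castLE hNN i)) ∂P)) := by
  exact statement6' k P hNN x hPD hPD'
end

section
/- Let k and r be reproducing kernels on D, with Hilbert spaces of functions H(k) and H(r) on D satisfying the respective reproducing properties, and suppose both kernels satisfy the measurability and integrability conditions with respect to P (k(·,x) and r(·,x) are P-measurable for all x, and ∫_D √(k(x,x)) dP < ∞, ∫_D √(r(x,x)) dP < ∞). If H(k) ⊆ H(r) as sets of functions, then there is a constant c > 0 such that for every finite set of pairwise distinct nodes X ⊂ D with positive definite Gram matrices, the integral variances satisfy Σ_{D,k} ≤ c · Σ_{D,r}. -/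
open MeasureTheory RealInnerProductSpace Matrix
open Filter Topology

set_option linter.unusedSectionVars false
set_option linter.unusedVariables false
set_option maxHeartbeats 1000000

section Aux

variable {D : Type*} [MeasurableSpace D]
  {H : Type*} [NormedAddCommGroup H] [InnerProductSpace ℝ H] [CompleteSpace H]

lemma aux_norm_K (φ : H →ₗ[ℝ] (D → ℝ)) (k : D → D → ℝ) (K : D → H)
    (hK : ∀ x x' : D, φ (K x) x' = k x' x)
    (hrepro : ∀ (g : H) (x : D), ⟪g, K x⟫ = φ g x) (x : D) :
    ‖K x‖ = Real.sqrt (k x x) := by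
  have h : ⟪K x, K x⟫ = k x x := by rw [hrepro, hK]
  rw [real_inner_self_eq_norm_sq] at h
  rw [← h, Real.sqrt_sq (norm_nonneg _)]

lemma aux_bound (φ : H →ₗ[ℝ] (D → ℝ)) (k : D → D → ℝ) (K : D → H)
    (hK : ∀ x x' : D, φ (K x) x' = k x' x)
    (hrepro : ∀ (g : H) (x : D), ⟪g, K x⟫ = φ g x) (g : H) (x : D) :
    |φ g x| ≤ ‖g‖ * Real.sqrt (k x x) := by
  rw [← hrepro, ← aux_norm_K φ k K hK hrepro]
  exact abs_real_inner_le_norm g (K x)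

lemma aux_meas (φ : H →ₗ[ℝ] (D → ℝ)) (k : D → D → ℝ) (K : D → H)
    (hK : ∀ x x' : D, φ (K x) x' = k x' x)
    (hrepro : ∀ (g : H) (x : D), ⟪g, K x⟫ = φ g x)
    (P : Measure D)
    (hmeas : ∀ x : D, AEStronglyMeasurable (fun x' => k x' x) P)
    (g : H) : AEStronglyMeasurable (φ g) P := by
  set S := (Submodule.span ℝ (Set.range K)).topologicalClosure with hS
  haveI : CompleteSpace S := (Submodule.isClosed_topologicalClosure _).completeSpace_coe
  set p : H := (Submodule.orthogonalProjection S g : H) with hp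
  have hKS : ∀ x, K x ∈ S := fun x =>
    Submodule.le_topologicalClosure _ (Submodule.subset_span ⟨x, rfl⟩)
  have heq : ∀ x, φ g x = ⟪p, K x⟫ := by
    intro x
    have h0 : ⟪K x, g - p⟫ = (0:ℝ) :=
      (Submodule.mem_orthogonal _ _).1 (Submodule.sub_starProjection_mem_orthogonal g) _ (hKS x)
    rw [real_inner_comm, inner_sub_left] at h0
    rw [← hrepro g x]
    linarith
  have hspan : ∀ h ∈ Submodule.span ℝ (Set.range K),
      AEStronglyMeasurable (fun x => ⟪h, K x⟫) P := by
    intro h hh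
    induction hh using Submodule.span_induction with
    | mem v hv =>
      obtain ⟨y, rfl⟩ := hv
      have : (fun x => ⟪K y, K x⟫) = fun x => k x y := by
        funext x; rw [hrepro, hK]
      rw [this]; exact hmeas y
    | zero => simp only [inner_zero_left]; exact aestronglyMeasurable_const
    | add a b _ _ ha hb => simp only [inner_add_left]; exact ha.add hb
    | smul c a _ ha => simpa only [real_inner_smul_left] using ha.const_mul c
  have hpS : p ∈ closure ((Submodule.span ℝ (Set.range K) : Submodule ℝ H) : Set H) := by
    rw [← Submodule.topologicalClosure_coe]
    exact (Submodule.orthogonalProjection S g).2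
  obtain ⟨u, hu_mem, hu_lim⟩ := mem_closure_iff_seq_limit.1 hpS
  have hlim : ∀ x, Tendsto (fun n => ⟪u n, K x⟫) atTop (𝓝 (⟪p, K x⟫ : ℝ)) := fun x =>
    (hu_lim.inner tendsto_const_nhds)
  have : AEStronglyMeasurable (fun x => (⟪p, K x⟫ : ℝ)) P :=
    aestronglyMeasurable_of_tendsto_ae atTop (fun n => hspan (u n) (hu_mem n))
      (ae_of_all _ hlim)
  exact this.congr (ae_of_all _ fun x => (heq x).symm)

lemma aux_int (φ : H →ₗ[ℝ] (D → ℝ)) (k : D → D → ℝ) (K : D → H)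
    (hK : ∀ x x' : D, φ (K x) x' = k x' x)
    (hrepro : ∀ (g : H) (x : D), ⟪g, K x⟫ = φ g x)
    (P : Measure D)
    (hmeas : ∀ x : D, AEStronglyMeasurable (fun x' => k x' x) P)
    (hint : Integrable (fun x => Real.sqrt (k x x)) P)
    (g : H) : Integrable (φ g) P := by
  refine (hint.const_mul ‖g‖).mono' (aux_meas φ k K hK hrepro P hmeas g)
    (ae_of_all _ fun x => ?_)
  rw [Real.norm_eq_abs]
  exact aux_bound φ k K hK hrepro g x


lemma aux_repr (φ : H →ₗ[ℝ] (D → ℝ)) (k : D → D → ℝ) (K : D → H)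
    (hK : ∀ x x' : D, φ (K x) x' = k x' x)
    (hrepro : ∀ (g : H) (x : D), ⟪g, K x⟫ = φ g x)
    (P : Measure D)
    (hmeas : ∀ x : D, AEStronglyMeasurable (fun x' => k x' x) P)
    (hint : Integrable (fun x => Real.sqrt (k x x)) P)
    {N : ℕ} (x : Fin N → D) (w : Fin N → ℝ) :
    ∃ η : H, ∀ g : H, ⟪η, g⟫ = (∫ t, φ g t ∂P) - ∑ i, w i * φ g (x i) := by
  have hI : ∀ g : H, Integrable (φ g) P := aux_int φ k K hK hrepro P hmeas hint
  set L0 : H →ₗ[ℝ] ℝ :=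
    { toFun := fun g => (∫ t, φ g t ∂P) - ∑ i, w i * φ g (x i)
      map_add' := by
        intro a b
        simp only [map_add, Pi.add_apply, mul_add]
        rw [integral_add (hI a) (hI b), Finset.sum_add_distrib]
        ring
      map_smul' := by
        intro c a
        simp only [LinearMap.map_smul, Pi.smul_apply, smul_eq_mul, RingHom.id_apply]
        rw [integral_const_mul,
          Finset.sum_congr rfl (fun i _ => by ring :
            ∀ i ∈ Finset.univ, w i * (c * φ a (x i)) = c * (w i * φ a (x i))),
          ← Finset.mul_sum]
        ring } with hL0
  have hb : ∀ g : H,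
      ‖L0 g‖ ≤ ((∫ t, Real.sqrt (k t t) ∂P) + ∑ i, |w i| * Real.sqrt (k (x i) (x i))) * ‖g‖ := by
    intro g
    have h1 : |∫ t, φ g t ∂P| ≤ ‖g‖ * ∫ t, Real.sqrt (k t t) ∂P := by
      calc |∫ t, φ g t ∂P| ≤ ∫ t, |φ g t| ∂P := by
            simpa only [Real.norm_eq_abs] using norm_integral_le_integral_norm (φ g)
        _ ≤ ∫ t, ‖g‖ * Real.sqrt (k t t) ∂P := by
            refine integral_mono (hI g).abs (hint.const_mul ‖g‖) fun t => ?_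
            exact aux_bound φ k K hK hrepro g t
        _ = ‖g‖ * ∫ t, Real.sqrt (k t t) ∂P := integral_const_mul _ _
    have h2 : |∑ i, w i * φ g (x i)| ≤ ∑ i, |w i| * (‖g‖ * Real.sqrt (k (x i) (x i))) := by
      calc |∑ i, w i * φ g (x i)| ≤ ∑ i, |w i * φ g (x i)| := Finset.abs_sum_le_sum_abs _ _
        _ ≤ ∑ i, |w i| * (‖g‖ * Real.sqrt (k (x i) (x i))) := by
            refine Finset.sum_le_sum fun i _ => ?_
            rw [abs_mul]
            exact mul_le_mul_of_nonneg_left (aux_bound φ k K hK hrepro g (x i)) (abs_nonneg _)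
    have h3 : ‖L0 g‖ ≤ |∫ t, φ g t ∂P| + |∑ i, w i * φ g (x i)| := by
      rw [hL0]
      simp only [LinearMap.coe_mk, AddHom.coe_mk, Real.norm_eq_abs]
      exact abs_sub _ _
    calc ‖L0 g‖ ≤ |∫ t, φ g t ∂P| + |∑ i, w i * φ g (x i)| := h3
      _ ≤ ‖g‖ * ∫ t, Real.sqrt (k t t) ∂P
          + ∑ i, |w i| * (‖g‖ * Real.sqrt (k (x i) (x i))) := add_le_add h1 h2
      _ = ((∫ t, Real.sqrt (k t t) ∂P) + ∑ i, |w i| * Real.sqrt (k (x i) (x i))) * ‖g‖ := by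
          rw [Finset.sum_congr rfl (fun i _ => by ring :
            ∀ i ∈ Finset.univ, |w i| * (‖g‖ * Real.sqrt (k (x i) (x i)))
              = |w i| * Real.sqrt (k (x i) (x i)) * ‖g‖), ← Finset.sum_mul]
          ring
  set L : H →L[ℝ] ℝ := LinearMap.mkContinuous L0 _ hb with hL
  refine ⟨(InnerProductSpace.toDual ℝ H).symm L, fun g => ?_⟩
  rw [InnerProductSpace.toDual_symm_apply]
  rfl

lemma aux_norm_sq (φ : H →ₗ[ℝ] (D → ℝ)) (k : D → D → ℝ) (K : D → H)
    (hK : ∀ x x' : D, φ (K x) x' = k x' x)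
    (hrepro : ∀ (g : H) (x : D), ⟪g, K x⟫ = φ g x)
    (P : Measure D)
    (hmeas : ∀ x : D, AEStronglyMeasurable (fun x' => k x' x) P)
    (hint : Integrable (fun x => Real.sqrt (k x x)) P)
    {N : ℕ} (x : Fin N → D) (w : Fin N → ℝ) (η : H)
    (hη : ∀ g : H, ⟪η, g⟫ = (∫ t, φ g t ∂P) - ∑ i, w i * φ g (x i)) :
    (∫ t, ∫ t', k t' t ∂P ∂P) - 2 * ∑ i, w i * (∫ t', k t' (x i) ∂P)
      + ∑ i, ∑ j, w i * (w j * k (x j) (x i)) = ‖η‖ ^ 2 := by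
  have hI : ∀ g : H, Integrable (φ g) P := aux_int φ k K hK hrepro P hmeas hint
  have hsymm : ∀ a b, k a b = k b a := by
    intro a b
    rw [← hK b a, ← hrepro (K b) a, real_inner_comm, hrepro, hK]
  have heval : ∀ t, φ η t = (∫ t', k t' t ∂P) - ∑ j, w j * k (x j) t := by
    intro t
    have h1 := hη (K t)
    rw [hrepro η t] at h1
    simp only [hK] at h1
    exact h1
  have hksum : ∀ j, (fun t => k (x j) t) = φ (K (x j)) := by
    intro j; funext t; rw [hK, hsymm]
  have hIsum : Integrable (fun t => ∑ j, w j * k (x j) t) P := by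
    refine integrable_finset_sum _ fun j _ => ?_
    rw [show (fun t => w j * k (x j) t) = fun t => w j * φ (K (x j)) t by
      funext t; rw [← hksum j]]
    exact (hI (K (x j))).const_mul _
  have hdouble : (∫ t, ∫ t', k t' t ∂P ∂P)
      = (∫ t, φ η t ∂P) + ∑ j, w j * (∫ t', k t' (x j) ∂P) := by
    have h1 : (fun t => ∫ t', k t' t ∂P) = fun t => φ η t + ∑ j, w j * k (x j) t := by
      funext t; rw [heval t]; ring
    rw [h1, integral_add (hI η) hIsum, integral_finset_sum _
      (fun j _ => by
        rw [show (fun t => w j * k (x j) t) = fun t => w j * φ (K (x j)) t by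
          funext t; rw [← hksum j]]
        exact (hI (K (x j))).const_mul _)]
    congr 1
    refine Finset.sum_congr rfl fun j _ => ?_
    rw [integral_const_mul]
    congr 1
    refine integral_congr_ae (ae_of_all _ fun t => ?_)
    exact (hsymm (x j) t).trans (rfl)
  have h2 : ‖η‖ ^ 2 = (∫ t, φ η t ∂P) - ∑ i, w i * φ η (x i) := by
    rw [← hη η, real_inner_self_eq_norm_sq]
  have h3 : (∫ t, φ η t ∂P)
      = (∫ t, ∫ t', k t' t ∂P ∂P) - ∑ j, w j * (∫ t', k t' (x j) ∂P) := by
    rw [hdouble]; ring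
  have h4 : ∀ i, w i * φ η (x i)
      = w i * (∫ t', k t' (x i) ∂P) - ∑ j, w i * (w j * k (x j) (x i)) := by
    intro i
    rw [heval (x i), mul_sub, Finset.mul_sum]
  rw [h2, h3, Finset.sum_congr rfl fun i _ => h4 i, Finset.sum_sub_distrib]
  ring

lemma aux_matrix_core {N : ℕ} (K : Matrix (Fin N) (Fin N) ℝ) (hK : K.PosDef)
    (z w : Fin N → ℝ) :
    (w - K⁻¹.mulVec z) ⬝ᵥ K.mulVec (w - K⁻¹.mulVec z)
      = w ⬝ᵥ K.mulVec w - 2 * (w ⬝ᵥ z) + z ⬝ᵥ K⁻¹.mulVec z := by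
  have hdet : IsUnit K.det := isUnit_iff_ne_zero.mpr hK.det_pos.ne'
  have hKv : K.mulVec (K⁻¹.mulVec z) = z := by
    rw [Matrix.mulVec_mulVec, Matrix.mul_nonsing_inv K hdet, Matrix.one_mulVec]
  have hKT : Kᵀ = K := by
    have := hK.1
    rwa [Matrix.IsHermitian, Matrix.conjTranspose_eq_transpose_of_trivial] at this
  have hcross : (K⁻¹.mulVec z) ⬝ᵥ K.mulVec w = z ⬝ᵥ w := by
    rw [Matrix.dotProduct_mulVec, ← Matrix.mulVec_transpose, hKT, hKv]
  rw [Matrix.mulVec_sub, sub_dotProduct, dotProduct_sub,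
    dotProduct_sub, hKv, hcross, dotProduct_comm z w,
    dotProduct_comm (K⁻¹.mulVec z) z]
  ring

lemma aux_matrix_le {N : ℕ} (K : Matrix (Fin N) (Fin N) ℝ) (hK : K.PosDef)
    (z w : Fin N → ℝ) :
    - (z ⬝ᵥ K⁻¹.mulVec z) ≤ w ⬝ᵥ K.mulVec w - 2 * (w ⬝ᵥ z) := by
  have h0 : 0 ≤ (w - K⁻¹.mulVec z) ⬝ᵥ K.mulVec (w - K⁻¹.mulVec z) := by
    have := hK.posSemidef.dotProduct_mulVec_nonneg (w - K⁻¹.mulVec z)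
    simpa using this
  have := aux_matrix_core K hK z w
  linarith

lemma aux_matrix_eq {N : ℕ} (K : Matrix (Fin N) (Fin N) ℝ) (hK : K.PosDef)
    (z : Fin N → ℝ) :
    (K⁻¹.mulVec z) ⬝ᵥ K.mulVec (K⁻¹.mulVec z) - 2 * ((K⁻¹.mulVec z) ⬝ᵥ z)
      = - (z ⬝ᵥ K⁻¹.mulVec z) := by
  have := aux_matrix_core K hK z (K⁻¹.mulVec z)
  have h0 : (K⁻¹.mulVec z - K⁻¹.mulVec z) ⬝ᵥ K.mulVec (K⁻¹.mulVec z - K⁻¹.mulVec z) = 0 := by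
    simp
  rw [this] at h0
  linarith

end Aux

/-- Let `k` and `r` be reproducing kernels on `D` with Hilbert spaces of
functions `Hk` and `Hr` (realised by injective linear maps into `D → ℝ`), both satisfying the
measurability and integrability conditions with respect to `P`.  If `H(k) ⊆ H(r)` as sets of
functions, then there is `c > 0` such that for every finite set of pairwise distinct nodes with
positive definite Gram matrices the integral variances satisfy `Σ_{D,k} ≤ c · Σ_{D,r}`. -/
theorem statement7
    {D : Type*} [MeasurableSpace D] [Nonempty D]
    {Hk : Type*} [NormedAddCommGroup Hk] [InnerProductSpace ℝ Hk] [CompleteSpace Hk]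
    {Hr : Type*} [NormedAddCommGroup Hr] [InnerProductSpace ℝ Hr] [CompleteSpace Hr]
    (φk : Hk →ₗ[ℝ] (D → ℝ)) (hφk : Function.Injective φk)
    (φr : Hr →ₗ[ℝ] (D → ℝ)) (hφr : Function.Injective φr)
    (k r : D → D → ℝ) (Kk : D → Hk) (Kr : D → Hr)
    (hKk : ∀ x x' : D, φk (Kk x) x' = k x' x)
    (hKr : ∀ x x' : D, φr (Kr x) x' = r x' x)
    (hreprok : ∀ (g : Hk) (x : D), ⟪g, Kk x⟫ = φk g x)
    (hrepror : ∀ (g : Hr) (x : D), ⟪g, Kr x⟫ = φr g x)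
    (P : Measure D) [IsProbabilityMeasure P]
    (hmeask : ∀ x : D, AEStronglyMeasurable (fun x' => k x' x) P)
    (hmeasr : ∀ x : D, AEStronglyMeasurable (fun x' => r x' x) P)
    (hintk : Integrable (fun x => Real.sqrt (k x x)) P)
    (hintr : Integrable (fun x => Real.sqrt (r x x)) P)
    (hsub : Set.range φk ⊆ Set.range φr) :
    ∃ c > (0:ℝ), ∀ (N : ℕ) (x : Fin N → D), Function.Injective x →
      (Matrix.of fun i j => k (x i) (x j)).PosDef →
      (Matrix.of fun i j => r (x i) (x j)).PosDef →
      (∫ t, ∫ t', k t' t ∂P ∂P)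
          - ((fun i => ∫ t', k t' (x i) ∂P)
              ⬝ᵥ ((Matrix.of fun i j => k (x i) (x j))⁻¹).mulVec
                (fun i => ∫ t', k t' (x i) ∂P))
        ≤ c * ((∫ t, ∫ t', r t' t ∂P ∂P)
          - ((fun i => ∫ t', r t' (x i) ∂P)
              ⬝ᵥ ((Matrix.of fun i j => r (x i) (x j))⁻¹).mulVec
                (fun i => ∫ t', r t' (x i) ∂P))) := by
  classical
  -- symmetry of the kernels
  have hksymm : ∀ a b, k a b = k b a := by
    intro a b
    rw [← hKk b a, ← hreprok (Kk b) a, real_inner_comm, hreprok, hKk]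
  have hrsymm : ∀ a b, r a b = r b a := by
    intro a b
    rw [← hKr b a, ← hrepror (Kr b) a, real_inner_comm, hrepror, hKr]
  -- the inclusion map ι : Hk → Hr
  have hmem : ∀ g : Hk, φk g ∈ LinearMap.range φr := by
    intro g
    have : φk g ∈ Set.range ⇑φr := hsub ⟨g, rfl⟩
    simpa [LinearMap.mem_range] using this
  set e := LinearEquiv.ofInjective φr hφr with he
  set ι : Hk →ₗ[ℝ] Hr :=
    (e.symm : LinearMap.range φr →ₗ[ℝ] Hr).comp
      (φk.codRestrict (LinearMap.range φr) hmem) with hιdef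
  have hι : ∀ g : Hk, φr (ι g) = φk g := by
    intro g
    have h1 : e (ι g) = φk.codRestrict (LinearMap.range φr) hmem g := by
      simp [hιdef]
    have h2 : (↑(e (ι g)) : D → ℝ) = φr (ι g) := by
      rw [he]; exact LinearEquiv.ofInjective_apply φr (ι g)
    rw [← h2, h1]; rfl
  have hcont : Continuous ι := by
    apply ι.continuous_of_seq_closed_graph
    intro u g h hu hιu
    have hpt : ∀ t, φr h t = φr (ι g) t := by
      intro t
      have l1 : Tendsto (fun n => (⟪(ι ∘ u) n, Kr t⟫ : ℝ)) atTop (𝓝 ⟪h, Kr t⟫) :=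
        hιu.inner tendsto_const_nhds
      have l2 : Tendsto (fun n => (⟪u n, Kk t⟫ : ℝ)) atTop (𝓝 ⟪g, Kk t⟫) :=
        hu.inner tendsto_const_nhds
      have heqn : (fun n => (⟪(ι ∘ u) n, Kr t⟫ : ℝ)) = fun n => (⟪u n, Kk t⟫ : ℝ) := by
        funext n
        rw [hrepror, hreprok, Function.comp_apply, hι]
      rw [heqn] at l1
      have := tendsto_nhds_unique l1 l2
      rw [hrepror, hreprok] at this
      rw [this, ← hι g]
    exact hφr (funext hpt)
  set ιL : Hk →L[ℝ] Hr := ⟨ι, hcont⟩ with hιL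
  refine ⟨‖ιL‖ ^ 2 + 1, by positivity, ?_⟩
  intro N x hxinj hKpd hRpd
  set zk : Fin N → ℝ := fun i => ∫ t', k t' (x i) ∂P with hzk
  set zr : Fin N → ℝ := fun i => ∫ t', r t' (x i) ∂P with hzr
  set Mk : Matrix (Fin N) (Fin N) ℝ := Matrix.of fun i j => k (x i) (x j) with hMk
  set Mr : Matrix (Fin N) (Fin N) ℝ := Matrix.of fun i j => r (x i) (x j) with hMr
  set w : Fin N → ℝ := Mr⁻¹.mulVec zr with hw
  obtain ⟨ηk, hηk⟩ := aux_repr φk k Kk hKk hreprok P hmeask hintk x w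
  obtain ⟨ηr, hηr⟩ := aux_repr φr r Kr hKr hrepror P hmeasr hintr x w
  have hQk := aux_norm_sq φk k Kk hKk hreprok P hmeask hintk x w ηk hηk
  have hQr := aux_norm_sq φr r Kr hKr hrepror P hmeasr hintr x w ηr hηr
  -- dot products as sums
  have hdotk : w ⬝ᵥ zk = ∑ i, w i * zk i := rfl
  have hdotr : w ⬝ᵥ zr = ∑ i, w i * zr i := rfl
  have hquadk : w ⬝ᵥ Mk.mulVec w = ∑ i, ∑ j, w i * (w j * k (x j) (x i)) := by
    rw [dotProduct]
    refine Finset.sum_congr rfl fun i _ => ?_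
    rw [Matrix.mulVec, dotProduct, Finset.mul_sum]
    refine Finset.sum_congr rfl fun j _ => ?_
    rw [hMk]
    simp only [Matrix.of_apply]
    rw [hksymm (x i) (x j)]
    ring
  have hquadr : w ⬝ᵥ Mr.mulVec w = ∑ i, ∑ j, w i * (w j * r (x j) (x i)) := by
    rw [dotProduct]
    refine Finset.sum_congr rfl fun i _ => ?_
    rw [Matrix.mulVec, dotProduct, Finset.mul_sum]
    refine Finset.sum_congr rfl fun j _ => ?_
    rw [hMr]
    simp only [Matrix.of_apply]
    rw [hrsymm (x i) (x j)]
    ring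
  -- step 1 : LHS ≤ ‖ηk‖²
  have step1 : (∫ t, ∫ t', k t' t ∂P ∂P) - zk ⬝ᵥ Mk⁻¹.mulVec zk ≤ ‖ηk‖ ^ 2 := by
    have h1 := aux_matrix_le Mk hKpd zk w
    rw [← hQk, ← hdotk, ← hquadk]
    linarith
  -- step 2 : ‖ηk‖² ≤ ‖ιL‖² ‖ηr‖²
  have step2 : ‖ηk‖ ^ 2 ≤ ‖ιL‖ ^ 2 * ‖ηr‖ ^ 2 := by
    have e1 : (⟪ηk, ηk⟫ : ℝ) = ⟪ηr, ιL ηk⟫ := by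
      rw [hηk ηk, hηr (ιL ηk)]
      have h2 : φr (ιL ηk) = φk ηk := hι ηk
      rw [h2]
    have hb : ‖ηk‖ ^ 2 ≤ ‖ιL‖ * ‖ηr‖ * ‖ηk‖ := by
      rw [← real_inner_self_eq_norm_sq, e1]
      calc (⟪ηr, ιL ηk⟫ : ℝ) ≤ ‖ηr‖ * ‖ιL ηk‖ := real_inner_le_norm _ _
        _ ≤ ‖ηr‖ * (‖ιL‖ * ‖ηk‖) :=
            mul_le_mul_of_nonneg_left (ιL.le_opNorm ηk) (norm_nonneg _)
        _ = ‖ιL‖ * ‖ηr‖ * ‖ηk‖ := by ring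
    nlinarith [sq_nonneg (‖ιL‖ * ‖ηr‖ - ‖ηk‖), norm_nonneg ηk, norm_nonneg ηr,
      norm_nonneg ιL]
  -- step 3 : ‖ηr‖² equals the r-side variance
  have step3 : ‖ηr‖ ^ 2 = (∫ t, ∫ t', r t' t ∂P ∂P) - zr ⬝ᵥ Mr⁻¹.mulVec zr := by
    have h1 := aux_matrix_eq Mr hRpd zr
    rw [← hQr, ← hdotr, ← hquadr, hw]
    linarith
  have hnn : (0:ℝ) ≤ ‖ηr‖ ^ 2 := sq_nonneg _
  calc (∫ t, ∫ t', k t' t ∂P ∂P) - zk ⬝ᵥ Mk⁻¹.mulVec zk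
      ≤ ‖ηk‖ ^ 2 := step1
    _ ≤ ‖ιL‖ ^ 2 * ‖ηr‖ ^ 2 := step2
    _ ≤ (‖ιL‖ ^ 2 + 1) * ‖ηr‖ ^ 2 := by nlinarith
    _ = (‖ιL‖ ^ 2 + 1) * ((∫ t, ∫ t', r t' t ∂P ∂P) - zr ⬝ᵥ Mr⁻¹.mulVec zr) := by
        rw [step3]
end

section
/- Let k be the square exponential kernel on D = [0,1]^d with parameters σ, ℓ > 0. Then there is a constant c > 0, depending only on σ and ℓ, such that for every finite set X = {x_1,…,x_N} ⊂ [0,1]^d of pairwise distinct nodes (N ≥ 2), the condition number of the Gram matrix satisfies cond(K_XX) = λ_max(K_XX)/λ_min(K_XX) ≥ exp(− c · h · log h), where h = min_{i=1,…,N} sup_{x ∈ [0,1]^d} min_{j ≠ i} ‖x − x_j‖. -/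
open Matrix Finset

lemma finsupp_prod_pow (u : Fin d →₀ ℕ) (x : Fin d → ℝ) :
    (u.prod fun n e => x n ^ e)
      = ∏ s : Fin (u.toMultiset.toList.length), x (u.toMultiset.toList.get s) := by
  have h1 : ∏ s : Fin (u.toMultiset.toList.length), x (u.toMultiset.toList.get s)
      = ((u.toMultiset.toList).map x).prod := by
    rw [← List.prod_ofFn]
    congr 1
    rw [show (fun s => x ((u.toMultiset).toList.get s)) = x ∘ (u.toMultiset).toList.get from rfl,
      ← List.map_ofFn, List.ofFn_get]
  rw [h1, ← Multiset.prod_coe, ← Multiset.map_coe, Multiset.coe_toList,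
    Finsupp.toMultiset_map, Finsupp.prod_toMultiset,
    Finsupp.prod_mapDomain_index (by simp) (by intros; rw [pow_add])]

lemma vanish_of_monomials {d N : ℕ} (y : Fin N → (Fin d → ℝ)) (hy : Function.Injective y)
    (w : Fin N → ℝ)
    (H : ∀ (k : ℕ) (t : Fin k → Fin d), ∑ i, w i * ∏ s, y i (t s) = 0) :
    ∀ i, w i = 0 := by
  have key : ∀ P : MvPolynomial (Fin d) ℝ, ∑ i, w i * MvPolynomial.eval (y i) P = 0 := by
    intro P
    induction P using MvPolynomial.induction_on' with
    | monomial u a =>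
      simp only [MvPolynomial.eval_monomial]
      have : ∀ i, w i * (a * u.prod fun n e => y i n ^ e)
          = a * (w i * ∏ s : Fin (u.toMultiset.toList.length), y i (u.toMultiset.toList.get s)) := by
        intro i; rw [finsupp_prod_pow]; ring
      simp only [this, ← Finset.mul_sum, H, mul_zero]
    | add p q hp hq =>
      simp only [map_add, mul_add, Finset.sum_add_distrib, hp, hq, add_zero]
  intro i
  have hKey := key (∏ j ∈ Finset.univ.erase i, (∑ m, (MvPolynomial.X m - MvPolynomial.C (y j m)) ^ 2))
  have heval : ∀ i', MvPolynomial.eval (y i')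
      (∏ j ∈ Finset.univ.erase i, (∑ m, (MvPolynomial.X m - MvPolynomial.C (y j m)) ^ 2))
      = ∏ j ∈ Finset.univ.erase i, (∑ m, (y i' m - y j m) ^ 2) := by
    intro i'; simp [MvPolynomial.eval_prod]
  rw [Finset.sum_eq_single i (fun b _ hb => by
      rw [heval, Finset.prod_eq_zero (Finset.mem_erase.mpr ⟨hb, Finset.mem_univ b⟩) (by simp),
        mul_zero])
    (fun hi => absurd (Finset.mem_univ i) hi)] at hKey
  rw [heval] at hKey
  have hpos : 0 < ∏ j ∈ Finset.univ.erase i, (∑ m, (y i m - y j m) ^ 2) := by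
    apply Finset.prod_pos
    intro j hj
    obtain ⟨hji, -⟩ := Finset.mem_erase.mp hj
    have hne : y i ≠ y j := fun hcon => hji (hy hcon).symm
    obtain ⟨m, hm⟩ := Function.ne_iff.mp hne.symm
    refine Finset.sum_pos' (fun m _ => sq_nonneg _) ⟨m, Finset.mem_univ m, ?_⟩
    have h2 : y i m - y j m ≠ 0 := sub_ne_zero.mpr hm.symm
    positivity
  exact (mul_eq_zero.mp hKey).resolve_right hpos.ne'


lemma gram_exp_pos {d N : ℕ} (y : Fin N → (Fin d → ℝ)) (hy : Function.Injective y)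
    (w : Fin N → ℝ) (hw : w ≠ 0)
    (hm : ∀ (k : ℕ) (t : Fin k → Fin d), ∑ i, w i * ∏ s, y i (t s) = 0 → False) :
    True := trivial

lemma hsq_lemma {d N : ℕ} (y : Fin N → (Fin d → ℝ)) (w : Fin N → ℝ) (k : ℕ) :
    (∑ i, ∑ j, w i * w j * (∑ m, y i m * y j m) ^ k)
      = ∑ t : Fin k → Fin d, (∑ i, w i * ∏ s, y i (t s)) ^ 2 := by
  have key : ∀ i j, w i * w j * (∑ m, y i m * y j m) ^ k
      = ∑ t : Fin k → Fin d, (w i * ∏ s, y i (t s)) * (w j * ∏ s, y j (t s)) := by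
    intro i j
    rw [Fintype.sum_pow, Finset.mul_sum]
    exact Finset.sum_congr rfl fun t _ => by rw [Finset.prod_mul_distrib]; ring
  simp_rw [key]
  calc ∑ i, ∑ j, ∑ t : Fin k → Fin d, (w i * ∏ s, y i (t s)) * (w j * ∏ s, y j (t s))
      = ∑ i, ∑ t : Fin k → Fin d, ∑ j, (w i * ∏ s, y i (t s)) * (w j * ∏ s, y j (t s)) := by
        exact Finset.sum_congr rfl fun i _ => Finset.sum_comm
    _ = ∑ t : Fin k → Fin d, ∑ i, ∑ j, (w i * ∏ s, y i (t s)) * (w j * ∏ s, y j (t s)) :=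
        Finset.sum_comm
    _ = ∑ t : Fin k → Fin d, (∑ i, w i * ∏ s, y i (t s)) ^ 2 := by
        refine Finset.sum_congr rfl fun t _ => ?_
        rw [sq, Finset.sum_mul_sum]

lemma gram_exp_pos' {d N : ℕ} (y : Fin N → (Fin d → ℝ)) (hy : Function.Injective y)
    (w : Fin N → ℝ) (hw : w ≠ 0) :
    0 < ∑ i, ∑ j, w i * w j * Real.exp (∑ m, y i m * y j m) := by
  set g : Fin N → Fin N → ℝ := fun i j => ∑ m, y i m * y j m with hg
  have hexp : ∀ i j, Real.exp (g i j) = ∑' k : ℕ, g i j ^ k / k.factorial := by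
    intro i j; rw [Real.exp_eq_exp_ℝ, NormedSpace.exp_eq_tsum_div]
  set u : ℕ → ℝ := fun k => ∑ i, ∑ j, w i * w j * (g i j ^ k / k.factorial) with hu
  have hsummable : ∀ (i j : Fin N), Summable fun k : ℕ => w i * w j * (g i j ^ k / k.factorial) :=
    fun i j => (Real.summable_pow_div_factorial (g i j)).mul_left _
  have hsum_inner : ∀ i : Fin N, Summable fun k : ℕ => ∑ j, w i * w j * (g i j ^ k / k.factorial) :=
    fun i => summable_sum fun j _ => hsummable i j
  have husum : Summable u := summable_sum fun i _ => hsum_inner i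
  have hQ : (∑ i, ∑ j, w i * w j * Real.exp (g i j)) = ∑' k, u k := by
    have h1 : ∀ i j, w i * w j * Real.exp (g i j)
        = ∑' k : ℕ, w i * w j * (g i j ^ k / k.factorial) := by
      intro i j; rw [hexp, tsum_mul_left]
    calc ∑ i, ∑ j, w i * w j * Real.exp (g i j)
        = ∑ i, ∑' k : ℕ, ∑ j, w i * w j * (g i j ^ k / k.factorial) := by
          refine Finset.sum_congr rfl fun i _ => ?_
          simp_rw [h1]
          exact (Summable.tsum_finsetSum fun j _ => hsummable i j).symm
      _ = ∑' k, u k := (Summable.tsum_finsetSum fun i _ => hsum_inner i).symm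
  have hTk : ∀ k : ℕ, u k = (∑ t : Fin k → Fin d, (∑ i, w i * ∏ s, y i (t s)) ^ 2) / k.factorial := by
    intro k
    rw [← hsq_lemma y w k, hu]
    simp_rw [Finset.sum_div, mul_div_assoc]
    rfl
  have hu0 : ∀ k, 0 ≤ u k := by
    intro k
    rw [hTk]
    positivity
  rw [hQ]
  rcases lt_or_eq_of_le (tsum_nonneg hu0) with hlt | heq
  · exact hlt
  · exfalso
    have hzero : ∀ k, u k = 0 := fun k =>
      le_antisymm (by rw [heq]; exact Summable.le_tsum husum k fun j _ => hu0 j) (hu0 k)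
    have hmono : ∀ (k : ℕ) (t : Fin k → Fin d), ∑ i, w i * ∏ s, y i (t s) = 0 := by
      intro k t
      have h2 := hzero k
      rw [hTk] at h2
      have h3 : (∑ t : Fin k → Fin d, (∑ i, w i * ∏ s, y i (t s)) ^ 2) = 0 := by
        field_simp at h2
        simpa using h2
      have h4 := (Finset.sum_eq_zero_iff_of_nonneg (fun t _ => sq_nonneg _)).mp h3 t (Finset.mem_univ t)
      exact pow_eq_zero_iff two_ne_zero |>.mp h4
    exact hw (funext (vanish_of_monomials y hy w hmono))


section
variable {d N : ℕ}

lemma kernel_posDef (σ ℓ : ℝ) (hσ : 0 < σ) (hℓ : 0 < ℓ)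
    (pts : Fin N → EuclideanSpace ℝ (Fin d)) (hinj : Function.Injective pts)
    (hherm : (Matrix.of fun i j =>
        σ ^ 2 * Real.exp (-‖pts i - pts j‖ ^ 2 / (2 * ℓ ^ 2))).IsHermitian) :
    (Matrix.of fun i j =>
        σ ^ 2 * Real.exp (-‖pts i - pts j‖ ^ 2 / (2 * ℓ ^ 2))).PosDef := by
  classical
  refine Matrix.posDef_iff_dotProduct_mulVec.mpr ⟨hherm, fun x hx => ?_⟩
  set y : Fin N → (Fin d → ℝ) := fun i m => pts i m / ℓ with hy
  have hinner : ∀ a b : EuclideanSpace ℝ (Fin d), (inner ℝ a b : ℝ) = ∑ m, a m * b m := by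
    intro a b
    simp [PiLp.inner_apply, RCLike.inner_apply, conj_trivial]
    exact Finset.sum_congr rfl fun _ _ => mul_comm _ _
  have hyinj : Function.Injective y := by
    intro i j hij
    apply hinj
    ext m
    have := congrFun hij m
    simp only [hy] at this
    field_simp at this
    exact this
  have hkernel : ∀ i j, Real.exp (-‖pts i - pts j‖ ^ 2 / (2 * ℓ ^ 2))
      = Real.exp (-‖pts i‖ ^ 2 / (2 * ℓ ^ 2)) * Real.exp (∑ m, y i m * y j m)
        * Real.exp (-‖pts j‖ ^ 2 / (2 * ℓ ^ 2)) := by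
    intro i j
    rw [← Real.exp_add, ← Real.exp_add]
    congr 1
    have hsum : ∑ m, y i m * y j m = (inner ℝ (pts i) (pts j) : ℝ) / ℓ ^ 2 := by
      simp_rw [hy, div_mul_div_comm, ← Finset.sum_div, ← hinner, sq]
    rw [hsum, norm_sub_sq_real]
    have hl2 : (ℓ:ℝ) ^ 2 ≠ 0 := pow_ne_zero 2 hℓ.ne'
    field_simp
    ring
  set w : Fin N → ℝ := fun i => x i * Real.exp (-‖pts i‖ ^ 2 / (2 * ℓ ^ 2)) with hw
  have hwne : w ≠ 0 := by
    intro hcon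
    apply hx
    ext i
    have := congrFun hcon i
    simp only [hw, Pi.zero_apply, mul_eq_zero] at this
    exact this.resolve_right (Real.exp_ne_zero _)
  have hdot : dotProduct (star x) ((Matrix.of fun i j =>
        σ ^ 2 * Real.exp (-‖pts i - pts j‖ ^ 2 / (2 * ℓ ^ 2))) *ᵥ x)
      = σ ^ 2 * ∑ i, ∑ j, w i * w j * Real.exp (∑ m, y i m * y j m) := by
    simp only [dotProduct, Matrix.mulVec, Matrix.of_apply, star_trivial]
    rw [Finset.mul_sum]
    refine Finset.sum_congr rfl fun i _ => ?_
    rw [Finset.mul_sum, Finset.mul_sum]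
    refine Finset.sum_congr rfl fun j _ => ?_
    rw [hkernel i j]
    simp only [hw, dotProduct]
    ring
  rw [hdot]
  exact mul_pos (pow_pos hσ 2) (gram_exp_pos' y hyinj w hwne)

end


section
variable {N : ℕ}

lemma trace_eq_sum_eigen (A : Matrix (Fin N) (Fin N) ℝ) (hA : A.IsHermitian) :
    A.trace = ∑ i, hA.eigenvalues i := by
  conv_lhs => rw [hA.spectral_theorem]
  rw [Unitary.conjStarAlgAut_apply, Matrix.trace_mul_cycle, Matrix.UnitaryGroup.star_mul_self, Matrix.one_mul,
    Matrix.trace_diagonal]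
  simp

lemma rayleigh_lower (A : Matrix (Fin N) (Fin N) ℝ) (hA : A.IsHermitian) (μ : ℝ)
    (hμ : ∀ i, μ ≤ hA.eigenvalues i) (x : Fin N → ℝ) :
    μ * (x ⬝ᵥ x) ≤ x ⬝ᵥ (A *ᵥ x) := by
  classical
  set U : Matrix (Fin N) (Fin N) ℝ := (hA.eigenvectorUnitary : Matrix (Fin N) (Fin N) ℝ) with hU
  set z : Fin N → ℝ := x ᵥ* U with hz
  have hzz : star U *ᵥ x = z := by
    rw [Matrix.star_eq_conjTranspose, Matrix.conjTranspose_eq_transpose_of_trivial,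
      Matrix.mulVec_transpose]
  have hUU : U * star U = 1 := Matrix.mem_unitaryGroup_iff.mp hA.eigenvectorUnitary.2
  have h1 : z ⬝ᵥ z = x ⬝ᵥ x := by
    rw [show z ⬝ᵥ z = (x ᵥ* U) ⬝ᵥ (star U *ᵥ x) from by rw [hzz],
      Matrix.dotProduct_mulVec, Matrix.vecMul_vecMul, hUU, Matrix.vecMul_one]
  have hxx : x ⬝ᵥ x = ∑ i, z i ^ 2 := by
    rw [← h1]
    simp [dotProduct, sq]
  have hAx : x ⬝ᵥ (A *ᵥ x) = ∑ i, hA.eigenvalues i * z i ^ 2 := by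
    calc x ⬝ᵥ (A *ᵥ x)
        = z ⬝ᵥ ((Matrix.diagonal (RCLike.ofReal ∘ hA.eigenvalues)) *ᵥ z) := by
          conv_lhs => rw [hA.spectral_theorem, Unitary.conjStarAlgAut_apply]
          rw [← Matrix.mulVec_mulVec, ← Matrix.mulVec_mulVec, hzz, Matrix.dotProduct_mulVec]
      _ = ∑ i, hA.eigenvalues i * z i ^ 2 := by
          simp only [dotProduct, Matrix.mulVec_diagonal, Function.comp_apply]
          exact Finset.sum_congr rfl fun i _ => by simp; ring
  rw [hxx, hAx, Finset.mul_sum]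
  exact Finset.sum_le_sum fun i _ => mul_le_mul_of_nonneg_right (hμ i) (sq_nonneg _)

end


lemma neg_log_le (h : ℝ) (h0 : 0 < h) (h1 : h < 1) :
    h * (-Real.log h) ≤ Real.exp (-1) := by
  have hy : (0:ℝ) < h⁻¹ := by positivity
  have hlog : -Real.log h = Real.log h⁻¹ := (Real.log_inv h).symm
  have key : Real.log h⁻¹ ≤ h⁻¹ * Real.exp (-1) := by
    have h2 : Real.log (h⁻¹ * Real.exp (-1)) ≤ h⁻¹ * Real.exp (-1) - 1 :=
      Real.log_le_sub_one_of_pos (by positivity)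
    rw [Real.log_mul hy.ne' (Real.exp_ne_zero _), Real.log_exp] at h2
    linarith
  rw [hlog]
  calc h * Real.log h⁻¹ ≤ h * (h⁻¹ * Real.exp (-1)) :=
        mul_le_mul_of_nonneg_left key h0.le
    _ = Real.exp (-1) := by field_simp


/-- For the square exponential kernel on `[0,1]^d` with parameters
`σ, ℓ > 0` there is a constant `c > 0`, depending only on `σ` and `ℓ`, such that for every set
of `N ≥ 2` pairwise distinct nodes in `[0,1]^d` the condition number of the Gram matrix
satisfies `cond(K_XX) = λ_max/λ_min ≥ exp(− c · h · log h)`, where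
`h = min_i sup_{x ∈ [0,1]^d} min_{j ≠ i} ‖x − x_j‖`. -/
theorem statement9
    (d : ℕ) (σ ℓ : ℝ) (hσ : 0 < σ) (hℓ : 0 < ℓ) :
    ∃ c > (0:ℝ), ∀ (N : ℕ), 2 ≤ N → ∀ pts : Fin N → EuclideanSpace ℝ (Fin d),
      (∀ i m, pts i m ∈ Set.Icc (0:ℝ) 1) → Function.Injective pts →
      ∀ hK : (Matrix.of fun i j =>
          σ ^ 2 * Real.exp (-‖pts i - pts j‖ ^ 2 / (2 * ℓ ^ 2))).IsHermitian,
      ∀ h : ℝ,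
        h = (⨅ i : Fin N,
              ⨆ x ∈ {y : EuclideanSpace ℝ (Fin d) | ∀ m, y m ∈ Set.Icc (0:ℝ) 1},
                ⨅ j : {j : Fin N // j ≠ i}, ‖x - pts j.1‖) →
      Real.exp (-(c * h * Real.log h))
        ≤ (⨆ i, hK.eigenvalues i) / (⨅ i, hK.eigenvalues i) := by
  classical
  refine ⟨Real.exp (1 - 1/(2*ℓ^2)), Real.exp_pos _, ?_⟩
  intro N hN pts hbox hinj hK h hdef
  haveI hne : Nonempty (Fin N) := ⟨⟨0, by omega⟩⟩
  haveI hnesub : ∀ i : Fin N, Nonempty {j : Fin N // j ≠ i} := by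
    intro i
    by_cases h0 : i = ⟨0, by omega⟩
    · exact ⟨⟨⟨1, by omega⟩, by rw [h0]; simp [Fin.ext_iff]⟩⟩
    · exact ⟨⟨⟨0, by omega⟩, fun hc => h0 hc.symm⟩⟩
  set c := Real.exp (1 - 1/(2*ℓ^2)) with hc
  have hcpos : 0 < c := Real.exp_pos _
  set K : Matrix (Fin N) (Fin N) ℝ :=
    Matrix.of (fun i j => σ ^ 2 * Real.exp (-‖pts i - pts j‖ ^ 2 / (2 * ℓ ^ 2))) with hKdef
  have hPD : K.PosDef := kernel_posDef σ ℓ hσ hℓ pts hinj hK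
  set lam := hK.eigenvalues with hlam
  set lM := ⨆ i, lam i with hlM
  set lm := ⨅ i, lam i with hlm
  have heig : ∀ i, 0 < lam i := fun i => hPD.eigenvalues_pos i
  have hbB : BddBelow (Set.range lam) := Finite.bddBelow_range _
  have hbA : BddAbove (Set.range lam) := Finite.bddAbove_range _
  have hlm_le : ∀ i, lm ≤ lam i := fun i => ciInf_le hbB i
  have hlM_ge : ∀ i, lam i ≤ lM := fun i => le_ciSup hbA i
  have hlm_pos : 0 < lm := by
    obtain ⟨i₀, hi₀⟩ := Finite.exists_min lam
    have heq : lm = lam i₀ := le_antisymm (ciInf_le hbB i₀) (le_ciInf hi₀)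
    rw [heq]; exact heig i₀
  have hlmM : lm ≤ lM := le_trans (hlm_le (Classical.arbitrary _)) (hlM_ge _)
  have hs2 : (0:ℝ) < σ ^ 2 := by positivity
  -- upper eigenvalue at least σ²
  have htrace : K.trace = (N:ℝ) * σ ^ 2 := by
    simp [Matrix.trace, Matrix.diag, hKdef, Finset.card_univ, mul_comm]
  have hsum : (N:ℝ) * σ ^ 2 = ∑ i, lam i := by
    rw [← htrace]; exact trace_eq_sum_eigen K hK
  have hlM_sig : σ ^ 2 ≤ lM := by
    have h1 : ∑ i, lam i ≤ (N:ℝ) * lM := by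
      calc ∑ i, lam i ≤ ∑ _i : Fin N, lM := Finset.sum_le_sum fun i _ => hlM_ge i
        _ = (N:ℝ) * lM := by simp [Finset.sum_const, Finset.card_univ, nsmul_eq_mul]
    have hN0 : (0:ℝ) < N := by exact_mod_cast Nat.lt_of_lt_of_le Nat.zero_lt_two hN
    have := hsum ▸ h1
    exact le_of_mul_le_mul_left this hN0
  -- geometry : find a close pair
  set S : Set (EuclideanSpace ℝ (Fin d)) := {y | ∀ m, y m ∈ Set.Icc (0:ℝ) 1} with hS
  set F : Fin N → ℝ := fun i => ⨆ x ∈ S, ⨅ j : {j : Fin N // j ≠ i}, ‖x - pts j.1‖ with hF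
  have hdef' : h = ⨅ i, F i := hdef
  obtain ⟨i₀, hi₀⟩ := Finite.exists_min F
  have hh_eq : h = F i₀ := by
    rw [hdef']
    exact le_antisymm (ciInf_le (Finite.bddBelow_range _) i₀) (le_ciInf hi₀)
  obtain ⟨j₀, hj₀⟩ := Finite.exists_min (fun j : {j : Fin N // j ≠ i₀} => ‖pts i₀ - pts j.1‖)
  set δ := ‖pts i₀ - pts j₀.1‖ with hδ
  have hδpos : 0 < δ := by
    rw [hδ, norm_sub_pos_iff]
    exact fun hc => j₀.2 (hinj hc.symm)
  have hnorm_le : ∀ x ∈ S, ∀ j : Fin N, ‖x - pts j‖ ≤ Real.sqrt d := by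
    intro x hx j
    rw [EuclideanSpace.norm_eq]
    apply Real.sqrt_le_sqrt
    calc ∑ m, ‖(x - pts j) m‖ ^ 2 ≤ ∑ _m : Fin d, 1 := by
          refine Finset.sum_le_sum fun m _ => ?_
          have h1 := hx m
          have h2 := hbox j m
          simp only [Set.mem_Icc] at h1 h2
          have : ‖(x - pts j) m‖ ≤ 1 := by
            have hxm : (x - pts j) m = x m - pts j m := rfl
            rw [hxm, Real.norm_eq_abs, abs_le]
            constructor <;> linarith [h1.1, h1.2, h2.1, h2.2]
          calc ‖(x - pts j) m‖ ^ 2 ≤ 1 ^ 2 := by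
                exact pow_le_pow_left₀ (norm_nonneg _) this 2
            _ = 1 := one_pow 2
      _ = (d:ℝ) := by simp
  have hmem : pts i₀ ∈ S := fun m => hbox i₀ m
  have hδh : δ ≤ h := by
    rw [hh_eq]
    have hBdd : BddAbove (Set.range fun x : EuclideanSpace ℝ (Fin d) =>
        ⨆ _ : x ∈ S, ⨅ j : {j : Fin N // j ≠ i₀}, ‖x - pts j.1‖) := by
      refine ⟨Real.sqrt d, ?_⟩
      rintro r ⟨x, rfl⟩
      show (⨆ _ : x ∈ S, ⨅ j : {j : Fin N // j ≠ i₀}, ‖x - pts j.1‖) ≤ Real.sqrt d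
      by_cases hx : x ∈ S
      · rw [ciSup_pos hx]
        refine le_trans (ciInf_le ⟨0, ?_⟩ (Classical.arbitrary _)) (hnorm_le x hx _)
        rintro r ⟨j, rfl⟩
        exact norm_nonneg _
      · haveI : IsEmpty (x ∈ S) := ⟨hx⟩
        rw [Real.iSup_of_isEmpty]
        exact Real.sqrt_nonneg _
    calc δ ≤ ⨅ j : {j : Fin N // j ≠ i₀}, ‖pts i₀ - pts j.1‖ := le_ciInf hj₀
      _ = ⨆ _ : pts i₀ ∈ S, ⨅ j : {j : Fin N // j ≠ i₀}, ‖pts i₀ - pts j.1‖ :=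
          (ciSup_pos (f := fun _ : pts i₀ ∈ S => ⨅ j : {j : Fin N // j ≠ i₀}, ‖pts i₀ - pts j.1‖)
            hmem).symm
      _ ≤ F i₀ := le_ciSup hBdd (pts i₀)
  have hh : 0 < h := lt_of_lt_of_le hδpos hδh
  -- Rayleigh bound
  have hab : j₀.1 ≠ i₀ := j₀.2
  set x : Fin N → ℝ := Pi.single i₀ 1 - Pi.single j₀.1 1 with hx
  have hKdiag : ∀ i : Fin N, K i i = σ ^ 2 := by
    intro i; simp [hKdef]
  have hKab : K i₀ j₀.1 = σ ^ 2 * Real.exp (-δ ^ 2 / (2 * ℓ ^ 2)) := by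
    simp [hKdef, hδ]
  have hKba : K j₀.1 i₀ = σ ^ 2 * Real.exp (-δ ^ 2 / (2 * ℓ ^ 2)) := by
    simp only [hKdef, Matrix.of_apply]
    rw [norm_sub_rev]
  have hxx : x ⬝ᵥ x = 2 := by
    rw [hx, sub_dotProduct, single_dotProduct, single_dotProduct]
    simp [Pi.single_apply, hab, Ne.symm hab]
    norm_num
  have hxKx : x ⬝ᵥ (K *ᵥ x) = 2 * σ ^ 2 - 2 * (σ ^ 2 * Real.exp (-δ ^ 2 / (2 * ℓ ^ 2))) := by
    rw [hx, Matrix.mulVec_sub, sub_dotProduct, single_dotProduct,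
      single_dotProduct]
    simp only [Pi.sub_apply, Matrix.mulVec_single, mul_one, one_mul, MulOpposite.op_one, one_smul,
      Matrix.col_apply]
    rw [hKdiag, hKdiag, hKab, hKba]
    ring
  have hray := rayleigh_lower K hK lm hlm_le x
  rw [hxx, hxKx] at hray
  have hEδ : Real.exp (-h ^ 2 / (2 * ℓ ^ 2)) ≤ Real.exp (-δ ^ 2 / (2 * ℓ ^ 2)) := by
    apply Real.exp_le_exp.mpr
    rw [neg_div, neg_div, neg_le_neg_iff]
    gcongr
  set E := Real.exp (-h ^ 2 / (2 * ℓ ^ 2)) with hE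
  have hE0 : 0 < E := Real.exp_pos _
  have hlm_ub : lm ≤ σ ^ 2 * (1 - E) := by nlinarith
  -- final numeric comparison
  rcases le_or_gt 1 h with hge | hlt
  · have h1 : Real.exp (-(c * h * Real.log h)) ≤ 1 := by
      rw [Real.exp_le_one_iff]
      have h3 : 0 ≤ c * h * Real.log h :=
        mul_nonneg (by positivity) (Real.log_nonneg hge)
      linarith
    exact le_trans h1 ((one_le_div hlm_pos).mpr hlmM)
  · have hE1 : E < 1 := by
      rw [hE, Real.exp_lt_one_iff]
      have : 0 < h ^ 2 / (2 * ℓ ^ 2) := by positivity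
      rw [neg_div]
      linarith
    have h1E : 0 < 1 - E := by linarith
    have stepA : Real.exp (-(c * h * Real.log h)) ≤ Real.exp E := by
      apply Real.exp_le_exp.mpr
      have e1 : -(c * h * Real.log h) = c * (h * (-Real.log h)) := by ring
      rw [e1]
      calc c * (h * (-Real.log h)) ≤ c * Real.exp (-1) :=
            mul_le_mul_of_nonneg_left (neg_log_le h hh hlt) hcpos.le
        _ = Real.exp (-1/(2*ℓ^2)) := by rw [hc, ← Real.exp_add]; congr 1; ring
        _ ≤ E := by
            rw [hE]
            apply Real.exp_le_exp.mpr
            rw [neg_div, neg_div, neg_le_neg_iff]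
            gcongr
            nlinarith
    have stepB : Real.exp E ≤ 1 / (1 - E) := by
      rw [le_div_iff₀ h1E]
      have h2 : 1 - E ≤ Real.exp (-E) := by
        have := Real.add_one_le_exp (-E); linarith
      calc Real.exp E * (1 - E) ≤ Real.exp E * Real.exp (-E) :=
            mul_le_mul_of_nonneg_left h2 (Real.exp_pos _).le
        _ = 1 := by rw [← Real.exp_add]; simp
    have stepC : 1 / (1 - E) ≤ lM / lm := by
      calc 1 / (1 - E) = σ ^ 2 / (σ ^ 2 * (1 - E)) := by
            rw [div_eq_div_iff h1E.ne' (by positivity : (0:ℝ) < σ ^ 2 * (1 - E)).ne']; ring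
        _ ≤ σ ^ 2 / lm := by gcongr
        _ ≤ lM / lm := by gcongr
    exact le_trans (le_trans stepA stepB) stepC
end

section
/- Suppose D = [0,1]^d, P has a density p on [0,1]^d with p_max = sup_{x ∈ [0,1]^d} p(x) < ∞, the function k(·,x) is continuous for every x ∈ D, and sup_{x ∈ D} k(x,x) < ∞. Let (X_N)_{N≥1} be nested node sets (X_N ⊂ X_{N+1}) of pairwise distinct points with invertible Gram matrices, whose fill-distances satisfy h_N → 0 as N → ∞. If f ∈ H, then the Bayesian quadrature means satisfy |I_P(f) − μ_N| → 0 as N → ∞. -/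
open MeasureTheory RealInnerProductSpace Matrix Filter
open scoped ENNReal
set_option maxHeartbeats 1000000

/-- The unit cube `[0,1]^d`, realised as a subtype of `EuclideanSpace ℝ (Fin d)`. -/
abbrev Cube (d : ℕ) : Type := {x : EuclideanSpace ℝ (Fin d) // ∀ m, x m ∈ Set.Icc (0:ℝ) 1}

instance cubeCompact (d : ℕ) : CompactSpace (Cube d) :=
  isCompact_iff_compactSpace.mp (by
    apply Metric.isCompact_of_isClosed_isBounded
    · show IsClosed {x : EuclideanSpace ℝ (Fin d) | ∀ m, x m ∈ Set.Icc (0:ℝ) 1}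
      have : {x : EuclideanSpace ℝ (Fin d) | ∀ m, x m ∈ Set.Icc (0:ℝ) 1}
          = ⋂ m, (fun x : EuclideanSpace ℝ (Fin d) => x m) ⁻¹' Set.Icc (0:ℝ) 1 := by
        ext x; simp [Set.mem_iInter]
      rw [this]
      exact isClosed_iInter fun m =>
        (isClosed_Icc).preimage (EuclideanSpace.proj m).continuous
    · apply Bornology.IsBounded.subset (Metric.isBounded_closedBall
        (x := (0 : EuclideanSpace ℝ (Fin d))) (r := Real.sqrt d))
      intro x hx
      simp only [Metric.mem_closedBall, dist_zero_right]
      rw [EuclideanSpace.norm_eq]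
      apply Real.sqrt_le_sqrt
      calc ∑ i, ‖x i‖ ^ 2 ≤ ∑ _i : Fin d, (1:ℝ) := by
            apply Finset.sum_le_sum
            intro i _
            have h1 := (hx i).1; have h2 := (hx i).2
            have h3 : |x i| ≤ 1 := abs_le.mpr ⟨by linarith, h2⟩
            calc ‖x i‖ ^ 2 = |x i| ^ 2 := by rw [Real.norm_eq_abs]
              _ ≤ 1 ^ 2 := by apply pow_le_pow_left₀ (abs_nonneg _) h3
              _ = 1 := one_pow 2
        _ = d := by simp)

/-- On `D = [0,1]^d` with `P` having a bounded density with respect to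
Lebesgue measure, `k(·,x)` continuous for every `x` and `sup_x k(x,x) < ∞`, if the nested node
sets (initial segments of an injective sequence `pts`) have invertible Gram matrices and
fill-distances tending to zero, then for every `f ∈ H` the Bayesian quadrature means satisfy
`|I_P(f) − μ_N| → 0` as `N → ∞`. -/
theorem statement11
    {d : ℕ}
    {H : Type*} [NormedAddCommGroup H] [InnerProductSpace ℝ H] [CompleteSpace H]
    (φ : H →ₗ[ℝ] (Cube d → ℝ)) (hφ : Function.Injective φ)
    (k : Cube d → Cube d → ℝ) (Kf : Cube d → H)
    (hKf : ∀ x x' : Cube d, φ (Kf x) x' = k x' x)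
    (hrepro : ∀ (g : H) (x : Cube d), ⟪g, Kf x⟫ = φ g x)
    (P : Measure (Cube d)) [IsProbabilityMeasure P]
    (p : Cube d → ℝ≥0∞) (hpmeas : Measurable p)
    (hP : P = (Measure.comap Subtype.val
      (volume : Measure (EuclideanSpace ℝ (Fin d)))).withDensity p)
    (pmax : ℝ≥0∞) (hpmax : ∀ x, p x ≤ pmax) (hpmaxlt : pmax < ⊤)
    (hcont : ∀ x : Cube d, Continuous fun x' => k x' x)
    (hbdd : BddAbove (Set.range fun x => k x x))
    (pts : ℕ → Cube d) (hpts : Function.Injective pts)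
    (hinv : ∀ N : ℕ, IsUnit (Matrix.of fun i j : Fin N => k (pts i) (pts j)).det)
    (hfill : Tendsto (fun N : ℕ => ⨆ t : Cube d, ⨅ i : Fin N, dist t (pts i))
      atTop (nhds 0))
    (f : H) :
    Tendsto (fun N : ℕ =>
        |(∫ t, φ f t ∂P)
          - ((fun i : Fin N => ∫ t', k t' (pts i) ∂P)
              ⬝ᵥ ((Matrix.of fun i j : Fin N => k (pts i) (pts j))⁻¹).mulVec
                (fun i : Fin N => φ f (pts i)))|)
      atTop (nhds 0) := by
  classical
  haveI : OpensMeasurableSpace (Cube d) :=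
    Subtype.opensMeasurableSpace {x : EuclideanSpace ℝ (Fin d) | ∀ m, x m ∈ Set.Icc (0:ℝ) 1}
  -- uniform bound on ‖Kf x‖
  obtain ⟨M, hM⟩ := hbdd
  set C : ℝ := Real.sqrt M with hCdef
  have hC0 : 0 ≤ C := Real.sqrt_nonneg M
  have hdiag : ∀ x : Cube d, ⟪Kf x, Kf x⟫ = k x x := fun x => by rw [hrepro, hKf]
  have hnormKf : ∀ x : Cube d, ‖Kf x‖ ≤ C := by
    intro x
    have h1 : ‖Kf x‖ ^ 2 = k x x := by
      rw [← hdiag x, real_inner_self_eq_norm_sq]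
    have h2 : k x x ≤ M := hM ⟨x, rfl⟩
    have h3 : ‖Kf x‖ ^ 2 ≤ M := h1 ▸ h2
    have := Real.sqrt_le_sqrt h3
    rwa [Real.sqrt_sq (norm_nonneg _)] at this
  have hφbound : ∀ (g : H) (x : Cube d), |φ g x| ≤ ‖g‖ * C := by
    intro g x
    rw [← hrepro]
    calc |⟪g, Kf x⟫| ≤ ‖g‖ * ‖Kf x‖ := abs_real_inner_le_norm _ _
      _ ≤ ‖g‖ * C := mul_le_mul_of_nonneg_left (hnormKf x) (norm_nonneg g)
  -- continuity of φ g for every g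
  have hcontK : ∀ x : Cube d, Continuous (φ (Kf x)) := by
    intro x
    have : φ (Kf x) = fun x' => k x' x := funext fun x' => hKf x x'
    rw [this]; exact hcont x
  have hcontSpan : ∀ g ∈ Submodule.span ℝ (Set.range Kf), Continuous (φ g) := by
    intro g hg
    induction hg using Submodule.span_induction with
    | mem x hx =>
        obtain ⟨y, rfl⟩ := hx
        exact hcontK y
    | zero => rw [map_zero]; exact continuous_const
    | add x y _ _ hx hy => rw [map_add]; exact hx.add hy
    | smul c x _ hx => rw [φ.map_smul]; exact hx.const_smul c
  have hcontClos : ∀ g ∈ (Submodule.span ℝ (Set.range Kf)).topologicalClosure,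
      Continuous (φ g) := by
    intro g hg
    have hg' : g ∈ closure ((Submodule.span ℝ (Set.range Kf) : Submodule ℝ H) : Set H) := by
      rw [← Submodule.topologicalClosure_coe]; exact hg
    obtain ⟨u, hu_mem, hu_lim⟩ := mem_closure_iff_seq_limit.mp hg'
    have hTU : TendstoUniformly (fun n => φ (u n)) (φ g) atTop := by
      rw [Metric.tendstoUniformly_iff]
      intro ε hε
      have hnorm : Tendsto (fun n => ‖u n - g‖) atTop (nhds 0) :=
        tendsto_iff_norm_sub_tendsto_zero.mp hu_lim
      have hev : ∀ᶠ n in atTop, ‖u n - g‖ < ε / (C + 1) :=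
        hnorm.eventually (gt_mem_nhds (by positivity))
      filter_upwards [hev] with n hn t
      have h1 : |φ (g - u n) t| ≤ ‖g - u n‖ * C := hφbound _ _
      have h2 : φ (g - u n) t = φ g t - φ (u n) t := by rw [map_sub]; rfl
      rw [Real.dist_eq]
      have h3 : ‖g - u n‖ = ‖u n - g‖ := norm_sub_rev _ _
      have h4 : |φ g t - φ (u n) t| ≤ ‖u n - g‖ * C := by rw [← h2, ← h3]; exact h1
      have h5 : ‖u n - g‖ * C < ε := by
        have hCC : C < C + 1 := by linarith
        calc ‖u n - g‖ * C ≤ (ε / (C+1)) * C := by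
              apply mul_le_mul_of_nonneg_right (le_of_lt hn) hC0
          _ < ε := by
              rw [div_mul_eq_mul_div, div_lt_iff₀ (by positivity)]
              nlinarith [hε]
      exact lt_of_le_of_lt h4 h5
    exact hTU.continuous (Filter.Eventually.of_forall fun n => hcontSpan _ (hu_mem n)).frequently
  have hcontAll : ∀ g : H, Continuous (φ g) := by
    intro g
    set S := (Submodule.span ℝ (Set.range Kf)).topologicalClosure with hS
    haveI : CompleteSpace S := (Submodule.isClosed_topologicalClosure _).completeSpace_coe
    have hproj : φ g = φ ((S.starProjection g : H)) := by
      funext t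
      have h0 : g - (S.starProjection g : H) ∈ Sᗮ :=
        Submodule.sub_starProjection_mem_orthogonal g
      have hKt : Kf t ∈ S :=
        Submodule.le_topologicalClosure _ (Submodule.subset_span ⟨t, rfl⟩)
      have h1 : ⟪Kf t, g - (S.starProjection g : H)⟫ = 0 :=
        Submodule.inner_right_of_mem_orthogonal hKt h0
      have h2 : ⟪g - (S.starProjection g : H), Kf t⟫ = 0 := by
        rw [real_inner_comm]; exact h1
      rw [hrepro] at h2
      have h3 : φ (g - (S.starProjection g : H)) t
          = φ g t - φ ((S.starProjection g : H)) t := by rw [map_sub]; rfl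
      rw [h3] at h2
      linarith
    rw [hproj]
    exact hcontClos _ (Submodule.starProjection_apply_mem _ _)
  -- integrability
  have hint : ∀ g : H, Integrable (φ g) P := by
    intro g
    apply Integrable.mono' (integrable_const (‖g‖ * C)) ((hcontAll g).aestronglyMeasurable)
    exact ae_of_all _ fun t => by rw [Real.norm_eq_abs]; exact hφbound g t
  -- density of the nodes
  have hdense : Dense (Set.range pts) := by
    rw [Metric.dense_iff]
    intro t ε hε
    have h1 : ∀ᶠ N in atTop, (⨆ t : Cube d, ⨅ i : Fin N, dist t (pts i)) < ε :=
      hfill.eventually (gt_mem_nhds hε)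
    obtain ⟨N, hN⟩ := (h1.and (eventually_ge_atTop 1)).exists
    have hNpos : 0 < N := hN.2
    haveI : Nonempty (Fin N) := ⟨⟨0, hNpos⟩⟩
    have hbddsup : BddAbove (Set.range fun t : Cube d => ⨅ i : Fin N, dist t (pts i)) := by
      refine ⟨Metric.diam (Set.univ : Set (Cube d)), ?_⟩
      rintro r ⟨t, rfl⟩
      calc (⨅ i : Fin N, dist t (pts i)) ≤ dist t (pts (0:ℕ)) :=
            ciInf_le ⟨0, by rintro r ⟨i, rfl⟩; exact dist_nonneg⟩ (⟨0, hNpos⟩ : Fin N)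
        _ ≤ Metric.diam (Set.univ : Set (Cube d)) :=
            Metric.dist_le_diam_of_mem (isCompact_univ.isBounded) trivial trivial
    have h2 : (⨅ i : Fin N, dist t (pts i)) < ε :=
      lt_of_le_of_lt (le_ciSup hbddsup t) hN.1
    obtain ⟨i, hi⟩ := exists_lt_of_ciInf_lt h2
    exact ⟨pts i, Metric.mem_ball'.mpr hi, ⟨i, rfl⟩⟩
  -- subspaces
  set W : Submodule ℝ H := Submodule.span ℝ (Set.range fun i : ℕ => Kf (pts i)) with hW
  set S := W.topologicalClosure with hSdef
  haveI : CompleteSpace S := (Submodule.isClosed_topologicalClosure _).completeSpace_coe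
  have hKfS : ∀ t : Cube d, Kf t ∈ S := by
    intro t
    set v : H := Kf t - (S.starProjection (Kf t) : H) with hv
    have hvS : v ∈ Sᗮ := Submodule.sub_starProjection_mem_orthogonal _
    have hzero : φ v = fun _ => (0:ℝ) := by
      apply Continuous.ext_on hdense (hcontAll v) continuous_const
      rintro x ⟨i, rfl⟩
      have hmem : Kf (pts i) ∈ S :=
        Submodule.le_topologicalClosure _ (Submodule.subset_span ⟨i, rfl⟩)
      have h1 : ⟪Kf (pts i), v⟫ = 0 := Submodule.inner_right_of_mem_orthogonal hmem hvS
      have h2 : ⟪v, Kf (pts i)⟫ = 0 := by rw [real_inner_comm]; exact h1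
      rw [hrepro] at h2
      exact h2
    have hvt : ⟪v, Kf t⟫ = 0 := by
      rw [hrepro, hzero]
    have hvproj : ⟪v, (S.starProjection (Kf t) : H)⟫ = 0 := by
      rw [real_inner_comm]
      exact Submodule.inner_right_of_mem_orthogonal (Submodule.starProjection_apply_mem _ _) hvS
    have hvv : ⟪v, v⟫ = 0 := by
      have : ⟪v, v⟫ = ⟪v, Kf t⟫ - ⟪v, (S.starProjection (Kf t) : H)⟫ := by
        rw [hv, inner_sub_right]
      rw [this, hvt, hvproj, sub_zero]
    have hv0 : v = 0 := inner_self_eq_zero.mp hvv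
    have : Kf t = (S.starProjection (Kf t) : H) := by
      have := sub_eq_zero.mp (hv ▸ hv0)
      exact this
    rw [this]
    exact Submodule.starProjection_apply_mem _ _
  -- finite-dimensional subspaces and projections
  set V : ℕ → Submodule ℝ H :=
    fun N => Submodule.span ℝ (Set.range fun i : Fin N => Kf (pts i)) with hV
  have hinst : ∀ N : ℕ, Submodule.HasOrthogonalProjection (V N) := by
    intro N
    haveI : FiniteDimensional ℝ (V N) :=
      FiniteDimensional.span_of_finite ℝ (Set.finite_range _)
    infer_instance
  set Pj : ℕ → H → H :=
    fun N x => ((@Submodule.starProjection ℝ H _ _ _ (V N) (hinst N)) x : H) with hPj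
  have hPjmem : ∀ N x, Pj N x ∈ V N := fun N x => by haveI := hinst N; exact Submodule.starProjection_apply_mem _ _
  have hPjorth : ∀ N x, x - Pj N x ∈ (V N)ᗮ := fun N x => by
    haveI := hinst N; exact Submodule.sub_starProjection_mem_orthogonal x
  have hmin : ∀ (N : ℕ) (x w : H), w ∈ V N → ‖x - Pj N x‖ ≤ ‖x - w‖ := by
    intro N x w hw
    haveI := hinst N
    rw [hPj]
    rw [Submodule.starProjection_minimal]
    exact ciInf_le ⟨0, by rintro r ⟨y, rfl⟩; exact norm_nonneg _⟩ (⟨w, hw⟩ : V N)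
  have hadj : ∀ (N : ℕ) (x y : H), ⟪x - Pj N x, y⟫ = ⟪x, y - Pj N y⟫ := by
    intro N x y
    haveI := hinst N
    have h := Submodule.inner_starProjection_left_eq_right (V N) x y
    simp only [hPj]
    rw [inner_sub_left, inner_sub_right]
    rw [h]
  have hmono : Monotone V := by
    intro a b hab
    apply Submodule.span_mono
    rintro _ ⟨i, rfl⟩
    exact ⟨⟨(i : ℕ), lt_of_lt_of_le i.2 hab⟩, rfl⟩
  -- distance convergence
  have hdistV : ∀ t : Cube d,
      Tendsto (fun N => ‖Kf t - Pj N (Kf t)‖) atTop (nhds 0) := by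
    intro t
    rw [Metric.tendsto_atTop]
    intro ε hε
    have hKt : Kf t ∈ closure (W : Set H) := by
      rw [← Submodule.topologicalClosure_coe]; exact hKfS t
    obtain ⟨w, hw1, hw2⟩ := Metric.mem_closure_iff.mp hKt ε hε
    rw [dist_eq_norm] at hw2
    have hwsup : w ∈ ⨆ N, V N := by
      have hWsup : W ≤ ⨆ N, V N :=
        Submodule.span_le.mpr (by
          rintro _ ⟨i, rfl⟩
          exact Submodule.mem_iSup_of_mem (i+1)
            (Submodule.subset_span ⟨⟨i, Nat.lt_succ_self i⟩, rfl⟩))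
      exact hWsup hw1
    obtain ⟨N₀, hN₀⟩ := (Submodule.mem_iSup_of_directed V hmono.directed_le).mp hwsup
    refine ⟨N₀, fun N hN => ?_⟩
    have hwVN : w ∈ V N := hmono hN hN₀
    have : ‖Kf t - Pj N (Kf t)‖ ≤ ‖Kf t - w‖ := hmin N _ w hwVN
    rw [Real.dist_eq, sub_zero, abs_of_nonneg (norm_nonneg _)]
    exact lt_of_le_of_lt this hw2
  -- pointwise bound
  have hptw : ∀ (N : ℕ) (t : Cube d),
      |φ (f - Pj N f) t| ≤ ‖f‖ * ‖Kf t - Pj N (Kf t)‖ := by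
    intro N t
    rw [← hrepro]
    rw [hadj N f (Kf t)]
    exact abs_real_inner_le_norm _ _
  -- main convergence of integrals
  have hmain : Tendsto (fun N => ∫ t, φ (f - Pj N f) t ∂P) atTop (nhds 0) := by
    have hDC : Tendsto (fun N => ∫ t, φ (f - Pj N f) t ∂P) atTop
        (nhds (∫ (_ : Cube d), (0:ℝ) ∂P)) := by
      apply tendsto_integral_of_dominated_convergence (bound := fun _ => ‖f‖ * C)
      · intro n; exact (hcontAll _).aestronglyMeasurable
      · exact integrable_const _
      · intro n
        apply ae_of_all
        intro t
        rw [Real.norm_eq_abs]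
        calc |φ (f - Pj n f) t| ≤ ‖f‖ * ‖Kf t - Pj n (Kf t)‖ := hptw n t
          _ ≤ ‖f‖ * ‖Kf t - 0‖ := by
              apply mul_le_mul_of_nonneg_left _ (norm_nonneg f)
              exact hmin n (Kf t) 0 (Submodule.zero_mem _)
          _ = ‖f‖ * ‖Kf t‖ := by rw [sub_zero]
          _ ≤ ‖f‖ * C := mul_le_mul_of_nonneg_left (hnormKf t) (norm_nonneg f)
      · apply ae_of_all
        intro t
        have hsq : ∀ n, ‖φ (f - Pj n f) t‖ ≤ ‖f‖ * ‖Kf t - Pj n (Kf t)‖ := by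
          intro n; rw [Real.norm_eq_abs]; exact hptw n t
        apply squeeze_zero_norm hsq
        have := (hdistV t).const_mul ‖f‖
        simpa using this
    simpa using hDC
  -- identification of the quadrature rule with the projection
  have key : ∀ N : ℕ,
      (∫ t, φ f t ∂P)
        - ((fun i : Fin N => ∫ t', k t' (pts i) ∂P)
            ⬝ᵥ ((Matrix.of fun i j : Fin N => k (pts i) (pts j))⁻¹).mulVec
              (fun i : Fin N => φ f (pts i)))
      = ∫ t, φ (f - Pj N f) t ∂P := by
    intro N
    haveI := hinst N
    set KM : Matrix (Fin N) (Fin N) ℝ := Matrix.of fun i j => k (pts i) (pts j) with hKM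
    set c : Fin N → ℝ := KM⁻¹.mulVec (fun i : Fin N => φ f (pts (i:ℕ))) with hc
    set s : H := ∑ i : Fin N, c i • Kf (pts i) with hs
    have hsV : s ∈ V N :=
      Submodule.sum_mem _ fun i _ => Submodule.smul_mem _ _ (Submodule.subset_span ⟨i, rfl⟩)
    have hinnerKK : ∀ i j : Fin N, ⟪Kf (pts i), Kf (pts j)⟫ = k (pts j) (pts i) := by
      intro i j; rw [hrepro, hKf]
    have hgen : ∀ j : Fin N, ⟪f - s, Kf (pts j)⟫ = 0 := by
      intro j
      have h1 : ⟪s, Kf (pts j)⟫ = ∑ i : Fin N, c i * k (pts j) (pts i) := by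
        rw [hs, sum_inner]
        apply Finset.sum_congr rfl
        intro i _
        rw [real_inner_smul_left, hinnerKK]
      have hKK : KM * KM⁻¹ = 1 := Matrix.mul_nonsing_inv _ (hinv N)
      have hmv : KM.mulVec c = fun i : Fin N => φ f (pts (i:ℕ)) := by
        rw [hc, Matrix.mulVec_mulVec, hKK, Matrix.one_mulVec]
      have h2 : ∑ i : Fin N, c i * k (pts j) (pts i) = φ f (pts j) := by
        have h3 : KM.mulVec c j = φ f (pts j) := by rw [hmv]
        rw [← h3]
        simp only [Matrix.mulVec, dotProduct, hKM, Matrix.of_apply]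
        apply Finset.sum_congr rfl
        intro i _
        ring
      rw [inner_sub_left, h1, h2, hrepro, sub_self]
    have horth : ∀ w ∈ V N, ⟪f - s, w⟫ = 0 := by
      intro w hw
      induction hw using Submodule.span_induction with
      | mem x hx => obtain ⟨j, rfl⟩ := hx; exact hgen j
      | zero => exact inner_zero_right _
      | add x y _ _ hx hy => rw [inner_add_right, hx, hy, add_zero]
      | smul a x _ hx => rw [real_inner_smul_right, hx, mul_zero]
    have hPjf : Pj N f = s := by
      have := Submodule.eq_starProjection_of_mem_of_inner_eq_zero (u := f) hsV horth
      simpa [hPj] using this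
    have hφs : φ s = fun t => ∑ i : Fin N, c i * k t (pts i) := by
      funext t
      rw [← hrepro, hs, sum_inner]
      apply Finset.sum_congr rfl
      intro i _
      rw [real_inner_smul_left, hrepro, hKf]
    have hints : ∀ i : Fin N, Integrable (fun t => k t (pts i)) P := by
      intro i
      have h := hint (Kf (pts i))
      rwa [show φ (Kf (pts i)) = fun t => k t (pts i) from funext fun t => hKf _ _] at h
    have h3 : ∫ t, φ s t ∂P = ∑ i : Fin N, c i * ∫ t, k t (pts i) ∂P := by
      rw [hφs]
      rw [integral_finset_sum _ (fun i _ => (hints i).const_mul (c i))]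
      exact Finset.sum_congr rfl fun i _ => integral_const_mul _ _
    have hsub : ∫ t, φ (f - Pj N f) t ∂P
        = (∫ t, φ f t ∂P) - ∫ t, φ (Pj N f) t ∂P := by
      have : (fun t => φ (f - Pj N f) t) = fun t => φ f t - φ (Pj N f) t := by
        funext t; rw [map_sub]; rfl
      rw [this]
      exact integral_sub (hint f) (hint (Pj N f))
    rw [hsub, hPjf, h3]
    congr 1
    rw [dotProduct]
    apply Finset.sum_congr rfl
    intro i _
    ring
  have hfun : (fun N : ℕ =>
      |(∫ t, φ f t ∂P)
        - ((fun i : Fin N => ∫ t', k t' (pts i) ∂P)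
            ⬝ᵥ ((Matrix.of fun i j : Fin N => k (pts i) (pts j))⁻¹).mulVec
              (fun i : Fin N => φ f (pts i)))|)
      = fun N => |∫ t, φ (f - Pj N f) t ∂P| := funext fun N => by rw [key N]
  rw [hfun]
  have := hmain.abs
  simpa using this
end

section
/- Let K ∈ ℝ^{N×N} be symmetric positive definite, let λ ≥ 0, and let f ∈ ℝ^N. Set c_λ = (K + λ I_N)⁻¹ f and c_0 = K⁻¹ f. Then ‖f − K c_λ‖₂² + λ · c_λᵀ K c_λ ≤ λ · c_0ᵀ K c_0 = λ · fᵀ K⁻¹ f; in particular, ‖f − K c_λ‖₂ ≤ √λ · (fᵀ K⁻¹ f)^{1/2}. (In Bayesian quadrature terms: the residuals of the regularised posterior mean at the nodes satisfy Σ_{i=1}^N [f(x_i) − m_{D,λ}(x_i)]² + λ ‖m_{D,λ}‖²_{H(k)} ≤ λ ‖m_D‖²_{H(k)}.) -/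
open Matrix

/-- Let `K` be symmetric positive definite, `λ ≥ 0` and `f ∈ ℝ^N`.  With
`c_λ = (K + λ I_N)⁻¹ f` and `c_0 = K⁻¹ f`, one has
`‖f − K c_λ‖₂² + λ c_λᵀ K c_λ ≤ λ c_0ᵀ K c_0 = λ fᵀ K⁻¹ f`, and in particular
`‖f − K c_λ‖₂ ≤ √λ (fᵀ K⁻¹ f)^{1/2}`.  (These are the residual bounds for the regularised
posterior mean at the nodes.) -/
theorem statement15
    {N : ℕ} (K : Matrix (Fin N) (Fin N) ℝ) (hK : K.PosDef)
    (lam : ℝ) (hlam : 0 ≤ lam) (f : Fin N → ℝ)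
    (clam c0 : Fin N → ℝ)
    (hclam : clam = ((K + lam • (1 : Matrix (Fin N) (Fin N) ℝ))⁻¹).mulVec f)
    (hc0 : c0 = (K⁻¹).mulVec f) :
    ((∑ i, (f i - K.mulVec clam i) ^ 2) + lam * (clam ⬝ᵥ K.mulVec clam)
        ≤ lam * (f ⬝ᵥ (K⁻¹).mulVec f)) ∧
      c0 ⬝ᵥ K.mulVec c0 = f ⬝ᵥ (K⁻¹).mulVec f ∧
      Real.sqrt (∑ i, (f i - K.mulVec clam i) ^ 2)
        ≤ Real.sqrt lam * Real.sqrt (f ⬝ᵥ (K⁻¹).mulVec f) := by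
  have hKd : IsUnit K.det := hK.det_pos.ne'.isUnit
  have hsm : (lam • (1 : Matrix (Fin N) (Fin N) ℝ)).PosSemidef := by
    refine PosSemidef.of_dotProduct_mulVec_nonneg ?_ ?_
    · show (lam • (1 : Matrix (Fin N) (Fin N) ℝ))ᴴ = _; simp [conjTranspose_smul]
    · intro x
      simp only [smul_mulVec, one_mulVec, dotProduct_smul, smul_eq_mul, RCLike.star_def]
      have : 0 ≤ star x ⬝ᵥ x := dotProduct_star_self_nonneg x
      positivity
  have hAp : (K + lam • (1 : Matrix (Fin N) (Fin N) ℝ)).PosDef := hK.add_posSemidef hsm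
  have hf : K.mulVec clam + lam • clam = f := by
    have : (K + lam • (1 : Matrix (Fin N) (Fin N) ℝ)).mulVec clam = f := by
      rw [hclam, mulVec_mulVec, mul_nonsing_inv _ hAp.det_pos.ne'.isUnit, one_mulVec]
    simpa [add_mulVec, smul_mulVec] using this
  -- residual
  have hres : ∀ i, f i - K.mulVec clam i = lam * clam i := by
    intro i
    have := congrFun hf i
    simp only [Pi.add_apply, Pi.smul_apply, smul_eq_mul] at this
    linarith
  set g : Fin N → ℝ := (K⁻¹).mulVec clam with hg
  have hKg : K.mulVec g = clam := by
    rw [hg, mulVec_mulVec, mul_nonsing_inv _ hKd, one_mulVec]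
  have hKinvf : (K⁻¹).mulVec f = clam + lam • g := by
    rw [← hf]
    simp [mulVec_add, mulVec_smul, mulVec_mulVec, nonsing_inv_mul _ hKd, one_mulVec, hg]
  have hKsym : Kᵀ = K := by
    have := hK.1
    exact (by simpa [conjTranspose] using this : K.IsSymm).eq
  have hcross : (K.mulVec clam) ⬝ᵥ g = clam ⬝ᵥ clam := by
    calc (K.mulVec clam) ⬝ᵥ g = g ⬝ᵥ (K.mulVec clam) := dotProduct_comm _ _
    _ = (Kᵀ.mulVec g) ⬝ᵥ clam := by rw [dotProduct_mulVec, mulVec_transpose]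
    _ = clam ⬝ᵥ clam := by rw [hKsym, hKg]
  have hexp : f ⬝ᵥ (K⁻¹).mulVec f
      = clam ⬝ᵥ K.mulVec clam + 2 * lam * (clam ⬝ᵥ clam) + lam ^ 2 * (clam ⬝ᵥ g) := by
    rw [hKinvf, ← hf]
    simp only [dotProduct_add, add_dotProduct, smul_dotProduct, dotProduct_smul, smul_eq_mul]
    have h1 : (K.mulVec clam) ⬝ᵥ clam = clam ⬝ᵥ K.mulVec clam := dotProduct_comm _ _
    have h2 : clam ⬝ᵥ g = g ⬝ᵥ clam := dotProduct_comm _ _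
    rw [hcross, h1, h2]
    ring
  have hsum : (∑ i, (f i - K.mulVec clam i) ^ 2) = lam ^ 2 * (clam ⬝ᵥ clam) := by
    simp only [hres, dotProduct, Finset.mul_sum]
    exact Finset.sum_congr rfl fun i _ => by ring
  have hg0 : 0 ≤ clam ⬝ᵥ g := by
    have := hK.inv.posSemidef.dotProduct_mulVec_nonneg clam
    simpa [hg] using this
  have hcc : 0 ≤ clam ⬝ᵥ clam := by
    simpa using dotProduct_star_self_nonneg clam
  have hcKc : 0 ≤ clam ⬝ᵥ K.mulVec clam := by
    simpa using hK.posSemidef.dotProduct_mulVec_nonneg clam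
  have hmain : (∑ i, (f i - K.mulVec clam i) ^ 2) + lam * (clam ⬝ᵥ K.mulVec clam)
      ≤ lam * (f ⬝ᵥ (K⁻¹).mulVec f) := by
    rw [hsum, hexp]
    nlinarith [mul_nonneg hlam hcc, mul_nonneg (mul_nonneg hlam hlam) (mul_nonneg hlam hg0)]
  refine ⟨hmain, ?_, ?_⟩
  · have hKc0 : K.mulVec c0 = f := by
      rw [hc0, mulVec_mulVec, mul_nonsing_inv _ hKd, one_mulVec]
    rw [hKc0, hc0]
    exact dotProduct_comm _ _
  · have h1 : (∑ i, (f i - K.mulVec clam i) ^ 2) ≤ lam * (f ⬝ᵥ (K⁻¹).mulVec f) := by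
      nlinarith [mul_nonneg hlam hcKc]
    calc Real.sqrt (∑ i, (f i - K.mulVec clam i) ^ 2)
        ≤ Real.sqrt (lam * (f ⬝ᵥ (K⁻¹).mulVec f)) := Real.sqrt_le_sqrt h1
      _ = Real.sqrt lam * Real.sqrt (f ⬝ᵥ (K⁻¹).mulVec f) := Real.sqrt_mul hlam _
end

section
/- Suppose D = [0,1]^d, P has a density p with p_max = sup_{x ∈ [0,1]^d} p(x) < ∞, the function k(·,x) is continuous for every x ∈ D, sup_{x ∈ D} k(x,x) < ∞, and k(·,x) is P-measurable for all x. Suppose f ∈ H and that N nodes are selected sequentially so that, for each n ≥ 1, x_{n+1} ∈ argmax_{x̃ ∈ D} k_{P,X(x̃)}ᵀ K_{X(x̃)X(x̃)}⁻¹ k_{P,X(x̃)}, where X(x̃) = {x_1,…,x_n, x̃} (equivalently, x_{n+1} minimizes the next-step integral variance). Then there is a constant C > 0, depending only on D, P and k, such that |I_P(f) − μ_N| ≤ C N^{−1/2} ‖f‖_H. -/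
open MeasureTheory RealInnerProductSpace Matrix
open scoped ENNReal



section helpers2
variable {H : Type*} [NormedAddCommGroup H] [InnerProductSpace ℝ H] [CompleteSpace H]

lemma gram_quad {m : ℕ} (v : Fin m → H) (x : Fin m → ℝ) :
    x ⬝ᵥ ((Matrix.of fun i j => (⟪v i, v j⟫ : ℝ)) *ᵥ x) = ⟪∑ i, x i • v i, ∑ i, x i • v i⟫ := by
  simp only [dotProduct, Matrix.mulVec, Matrix.of_apply, sum_inner, inner_sum,
    real_inner_smul_left, real_inner_smul_right, dotProduct, Finset.mul_sum]
  congr 1; ext i; congr 1; ext j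
  rw [real_inner_comm]; ring

lemma gram_det_ne_zero {m : ℕ} {v : Fin m → H} (hv : LinearIndependent ℝ v) :
    (Matrix.of fun i j => (⟪v i, v j⟫ : ℝ)).det ≠ 0 := by
  intro hdet
  obtain ⟨x, hx0, hx⟩ := Matrix.exists_mulVec_eq_zero_iff.2 hdet
  have h1 : x ⬝ᵥ ((Matrix.of fun i j => (⟪v i, v j⟫ : ℝ)) *ᵥ x) = 0 := by
    rw [hx]; simp [dotProduct]
  rw [gram_quad] at h1
  have h2 : (∑ i, x i • v i) = 0 := by
    have := real_inner_self_eq_norm_sq (∑ i, x i • v i)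
    rw [h1] at this
    have : ‖∑ i, x i • v i‖ = 0 := by nlinarith [norm_nonneg (∑ i, x i • v i)]
    simpa using this
  exact hx0 (funext fun i => (Fintype.linearIndependent_iff.1 hv) x h2 i)

lemma gram_dot_eq_inner_proj {m : ℕ} (v : Fin m → H)
    [Submodule.HasOrthogonalProjection (Submodule.span ℝ (Set.range v))]
    (hv : LinearIndependent ℝ v) (u w : H) :
    (fun i => (⟪u, v i⟫ : ℝ)) ⬝ᵥ ((Matrix.of fun i j => (⟪v i, v j⟫ : ℝ))⁻¹ *ᵥ
        (fun i => (⟪w, v i⟫ : ℝ))) =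
      ⟪u, (Submodule.orthogonalProjection (Submodule.span ℝ (Set.range v)) w : H)⟫ := by
  set G : Matrix (Fin m) (Fin m) ℝ := Matrix.of fun i j => (⟪v i, v j⟫ : ℝ) with hG
  have hdet : IsUnit G.det := (gram_det_ne_zero hv).isUnit
  set c : Fin m → ℝ := G⁻¹ *ᵥ (fun i => (⟪w, v i⟫ : ℝ)) with hc
  have hGc : G *ᵥ c = fun i => (⟪w, v i⟫ : ℝ) := by
    rw [hc, Matrix.mulVec_mulVec, Matrix.mul_nonsing_inv _ hdet, Matrix.one_mulVec]
  have hproj : (Submodule.orthogonalProjection (Submodule.span ℝ (Set.range v)) w : H)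
      = ∑ i, c i • v i := by
    apply Submodule.eq_starProjection_of_mem_of_inner_eq_zero
    · exact Submodule.sum_mem _ fun i _ =>
        Submodule.smul_mem _ _ (Submodule.subset_span ⟨i, rfl⟩)
    · intro z hz
      refine Submodule.span_induction (fun z hz => ?_) (by simp) (fun a b _ _ ha hb => by
        rw [inner_add_right, ha, hb, add_zero]) (fun r a _ ha => by
        rw [real_inner_smul_right, ha, mul_zero]) hz
      obtain ⟨j, rfl⟩ := hz
      have := congrFun hGc j
      simp only [Matrix.mulVec, dotProduct, hG, Matrix.of_apply] at this
      rw [inner_sub_left, sum_inner]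
      simp only [real_inner_smul_left]
      rw [show (∑ i, c i * ⟪v i, v j⟫) = ∑ i, ⟪v j, v i⟫ * c i by
        congr 1; ext i; rw [real_inner_comm]; ring] at *
      rw [this]; ring
  rw [hproj, inner_sum]
  simp only [real_inner_smul_right, dotProduct]
  congr 1; ext i; ring

lemma proj_pyth (S : Submodule ℝ H) [Submodule.HasOrthogonalProjection S] (u : H) :
    ‖(Submodule.orthogonalProjection S u : H)‖^2 + ‖u - Submodule.orthogonalProjection S u‖^2 = ‖u‖^2 := by
  have h0 : ⟪u - Submodule.orthogonalProjection S u, (Submodule.orthogonalProjection S u : H)⟫ = 0 :=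
    Submodule.starProjection_inner_eq_zero u _ (Submodule.orthogonalProjection S u).2
  have := norm_add_sq_real (u - Submodule.orthogonalProjection S u) (Submodule.orthogonalProjection S u : H)
  simp only [sub_add_cancel, h0] at this
  linarith

lemma proj_min (S : Submodule ℝ H) [Submodule.HasOrthogonalProjection S] (u : H) {z : H} (hz : z ∈ S) :
    ‖u - Submodule.orthogonalProjection S u‖^2 ≤ ‖u - z‖^2 := by
  have h0 : ⟪u - Submodule.orthogonalProjection S u, (Submodule.orthogonalProjection S u : H) - z⟫ = 0 :=
    Submodule.starProjection_inner_eq_zero u _ (Submodule.sub_mem _ (Submodule.orthogonalProjection S u).2 hz)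
  have := norm_add_sq_real (u - Submodule.orthogonalProjection S u) ((Submodule.orthogonalProjection S u : H) - z)
  have he : (u - Submodule.orthogonalProjection S u) + ((Submodule.orthogonalProjection S u : H) - z) = u - z := by abel
  rw [he, h0] at this
  nlinarith [sq_nonneg ‖(Submodule.orthogonalProjection S u : H) - z‖]

end helpers2

section helpers
variable {H : Type*} [NormedAddCommGroup H] [InnerProductSpace ℝ H]

instance spanRangeFin_hasOrthProj {m : ℕ} (v : Fin m → H) :
    Submodule.HasOrthogonalProjection (Submodule.span ℝ (Set.range v)) := by
  haveI : FiniteDimensional ℝ (Submodule.span ℝ (Set.range v)) :=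
    FiniteDimensional.span_of_finite ℝ (Set.finite_range v)
  infer_instance

end helpers

lemma seq_bound {R : ℝ} (hR : 0 < R) (a : ℕ → ℝ) (ha0 : ∀ n, 1 ≤ n → 0 ≤ a n) (ha1 : a 1 ≤ R)
    (hrec : ∀ n, 1 ≤ n → a (n + 1) ≤ a n - a n ^ 2 / R) : ∀ n, 1 ≤ n → a n ≤ R / n := by
  intro n hn
  induction n, hn using Nat.le_induction with
  | base => simpa using ha1
  | succ n hn ih =>
    have hx0 := ha0 n hn
    have hn1 : (1:ℝ) ≤ (n:ℝ) := by exact_mod_cast hn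
    have hnpos : (0:ℝ) < (n:ℝ) := by linarith
    have hxn : (n:ℝ) * a n ≤ R := by
      rw [le_div_iff₀ hnpos] at ih; linarith [ih]
    have hpos : (0:ℝ) < (n:ℝ) + 1 := by linarith
    have ht : a n ^ 2 / R * R = a n ^ 2 := div_mul_cancel₀ _ hR.ne'
    have key : (a n - a n ^ 2 / R) * ((n:ℝ) + 1) ≤ R := by
      nlinarith [sq_nonneg (a n), sq_nonneg (R - (n:ℝ) * a n),
        mul_nonneg (mul_nonneg (sub_nonneg.2 hn1) hx0) (sub_nonneg.2 hxn),
        mul_pos hR hR]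
    have : a (n + 1) * ((n:ℝ) + 1) ≤ R :=
      le_trans (mul_le_mul_of_nonneg_right (hrec n hn) hpos.le) key
    rw [le_div_iff₀ (by push_cast; linarith : (0:ℝ) < ((n:ℕ)+1 : ℕ))]
    push_cast at this ⊢; linarith


/-- The acquisition value `k_{P,X(x̃)}ᵀ K_{X(x̃)X(x̃)}⁻¹ k_{P,X(x̃)}` obtained by appending the
candidate node `y` to the already selected nodes `pts 0, …, pts (n-1)`. -/
noncomputable def seqAcq {d : ℕ} (k : Cube d → Cube d → ℝ) (P : Measure (Cube d))
    (pts : ℕ → Cube d) (n : ℕ) (y : Cube d) : ℝ :=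
  (fun i : Fin (n + 1) => ∫ t', k t' (if (i : ℕ) < n then pts i else y) ∂P)
    ⬝ᵥ ((Matrix.of fun i j : Fin (n + 1) =>
        k (if (i : ℕ) < n then pts i else y) (if (j : ℕ) < n then pts j else y))⁻¹).mulVec
      (fun i : Fin (n + 1) => ∫ t', k t' (if (i : ℕ) < n then pts i else y) ∂P)

set_option maxHeartbeats 1000000 in
/-- On `D = [0,1]^d` with `P` having a bounded density, `k(·,x)` continuous
and `P`-measurable for every `x`, and `sup_x k(x,x) < ∞`, if `f ∈ H` and the nodes are
selected sequentially by maximising `k_{P,X(x̃)}ᵀ K_{X(x̃)X(x̃)}⁻¹ k_{P,X(x̃)}` (equivalently,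
minimising the next-step integral variance), then there is `C > 0`, depending only on `D`, `P`
and `k`, with `|I_P(f) − μ_N| ≤ C N^{−1/2} ‖f‖_H` for every `N ≥ 1`. -/
theorem statement17
    {d : ℕ}
    {H : Type*} [NormedAddCommGroup H] [InnerProductSpace ℝ H] [CompleteSpace H]
    (φ : H →ₗ[ℝ] (Cube d → ℝ)) (hφ : Function.Injective φ)
    (k : Cube d → Cube d → ℝ) (Kf : Cube d → H)
    (hKf : ∀ x x' : Cube d, φ (Kf x) x' = k x' x)
    (hrepro : ∀ (g : H) (x : Cube d), ⟪g, Kf x⟫ = φ g x)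
    (P : Measure (Cube d)) [IsProbabilityMeasure P]
    (p : Cube d → ℝ≥0∞) (hpmeas : Measurable p)
    (hP : P = (Measure.comap Subtype.val
      (volume : Measure (EuclideanSpace ℝ (Fin d)))).withDensity p)
    (pmax : ℝ≥0∞) (hpmax : ∀ x, p x ≤ pmax) (hpmaxlt : pmax < ⊤)
    (hcont : ∀ x : Cube d, Continuous fun x' => k x' x)
    (hmeas : ∀ x : Cube d, AEStronglyMeasurable (fun x' => k x' x) P)
    (hbdd : BddAbove (Set.range fun x => k x x))
    (f : H)
    (pts : ℕ → Cube d)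
    (hPD : ∀ N : ℕ, (Matrix.of fun i j : Fin N => k (pts i) (pts j)).PosDef)
    (hacq : ∀ n : ℕ, 1 ≤ n → ∀ y : Cube d, seqAcq k P pts n y ≤ seqAcq k P pts n (pts n)) :
    ∃ C > (0:ℝ), ∀ N : ℕ, 1 ≤ N →
      |(∫ t, φ f t ∂P)
          - ((fun i : Fin N => ∫ t', k t' (pts i) ∂P)
              ⬝ᵥ ((Matrix.of fun i j : Fin N => k (pts i) (pts j))⁻¹).mulVec
                (fun i : Fin N => φ f (pts i)))|
        ≤ C * (N : ℝ) ^ (-(1/2 : ℝ)) * ‖f‖ := by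
  classical
  set R := sSup (Set.range fun x => k x x) with hRdef
  have hRx : ∀ x, k x x ≤ R := fun x => le_csSup hbdd ⟨x, rfl⟩
  have hkinner : ∀ x x' : Cube d, k x' x = ⟪Kf x, Kf x'⟫ := fun x x' => by
    rw [hrepro, hKf]
  have hKfn : ∀ x : Cube d, ‖Kf x‖ ^ 2 = k x x := fun x => by
    rw [hkinner x x, real_inner_self_eq_norm_sq]
  have hMeq : ∀ N : ℕ, (Matrix.of fun i j : Fin N => k (pts i) (pts j)) =
      Matrix.of fun i j : Fin N => (⟪Kf (pts i), Kf (pts j)⟫ : ℝ) := by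
    intro N; ext i j
    simp only [Matrix.of_apply]
    rw [hkinner, real_inner_comm]
  have hR0 : (0:ℝ) < R := by
    have h := (hPD 1).dotProduct_mulVec_pos (x := fun _ => (1:ℝ)) (by
      intro h; exact one_ne_zero (congrFun h 0))
    simp only [star_trivial, Matrix.mulVec, dotProduct, Fin.sum_univ_one, Matrix.of_apply,
      mul_one, one_mul] at h
    exact h.trans_le (hRx _)
  -- measurability of all ⟪u, Kf ·⟫
  have hmeasu : ∀ u : H, AEStronglyMeasurable (fun t => (⟪u, Kf t⟫ : ℝ)) P := by
    have hspan : ∀ u ∈ Submodule.span ℝ (Set.range Kf),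
        AEStronglyMeasurable (fun t => (⟪u, Kf t⟫ : ℝ)) P := by
      intro u hu
      refine Submodule.span_induction (fun z hz => ?_) (by simpa using aestronglyMeasurable_const)
        (fun a b _ _ ha hb => by simpa only [inner_add_left, Pi.add_def] using ha.add hb)
        (fun r a _ ha => by simpa only [real_inner_smul_left] using ha.const_mul r) hu
      obtain ⟨x0, rfl⟩ := hz
      have he : (fun t => (⟪Kf x0, Kf t⟫ : ℝ)) = fun t => k t x0 :=
        funext fun t => (hkinner x0 t).symm
      rw [he]; exact hmeas x0
    have hcl : ∀ u ∈ (Submodule.span ℝ (Set.range Kf)).topologicalClosure,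
        AEStronglyMeasurable (fun t => (⟪u, Kf t⟫ : ℝ)) P := by
      intro u hu
      have hu' : u ∈ closure ((Submodule.span ℝ (Set.range Kf) : Submodule ℝ H) : Set H) := hu
      obtain ⟨s, hs, hlim⟩ := mem_closure_iff_seq_limit.1 hu'
      refine aestronglyMeasurable_of_tendsto_ae Filter.atTop (fun n => hspan (s n) (hs n)) ?_
      refine Filter.Eventually.of_forall fun t => ?_
      exact (hlim.inner tendsto_const_nhds)
    intro u
    set H0 := (Submodule.span ℝ (Set.range Kf)).topologicalClosure with hH0
    haveI : CompleteSpace H0 := (Submodule.isClosed_topologicalClosure _).completeSpace_coe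
    set u0 : H := (Submodule.orthogonalProjection H0 u : H) with hu0
    have he : (fun t => (⟪u, Kf t⟫ : ℝ)) = fun t => (⟪u0, Kf t⟫ : ℝ) := by
      funext t
      have hKt : Kf t ∈ H0 :=
        Submodule.le_topologicalClosure _ (Submodule.subset_span ⟨t, rfl⟩)
      have h0 : (⟪u - u0, Kf t⟫ : ℝ) = 0 :=
        Submodule.starProjection_inner_eq_zero u (Kf t) hKt
      have := inner_sub_left (𝕜 := ℝ) u u0 (Kf t)
      rw [h0] at this
      linarith [this.symm]
    rw [he]
    exact hcl u0 (Submodule.orthogonalProjection H0 u).2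
  have hbnd : ∀ (u : H) (t : Cube d), ‖(⟪u, Kf t⟫ : ℝ)‖ ≤ ‖u‖ * Real.sqrt R := by
    intro u t
    refine (abs_real_inner_le_norm u (Kf t)).trans ?_
    refine mul_le_mul_of_nonneg_left ?_ (norm_nonneg u)
    have : ‖Kf t‖ ^ 2 ≤ R := (hKfn t).le.trans (hRx t)
    nlinarith [Real.sq_sqrt hR0.le, Real.sqrt_nonneg R, norm_nonneg (Kf t)]
  have hInt : ∀ u : H, Integrable (fun t => (⟪u, Kf t⟫ : ℝ)) P :=
    fun u => Integrable.mono' (integrable_const (‖u‖ * Real.sqrt R)) (hmeasu u)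
      (Filter.Eventually.of_forall (hbnd u))
  -- the mean embedding μ
  obtain ⟨μ, hμ⟩ : ∃ μ : H, ∀ u, (⟪μ, u⟫ : ℝ) = ∫ t, ⟪u, Kf t⟫ ∂P := by
    have hbd : ∀ u : H, ‖∫ t, (⟪u, Kf t⟫:ℝ) ∂P‖ ≤ Real.sqrt R * ‖u‖ := by
      intro u
      calc ‖∫ t, (⟪u, Kf t⟫:ℝ) ∂P‖ ≤ (‖u‖ * Real.sqrt R) * (P Set.univ).toReal :=
            norm_integral_le_of_norm_le_const (Filter.Eventually.of_forall (hbnd u))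
        _ = Real.sqrt R * ‖u‖ := by simp [measure_univ]; ring
    refine ⟨(InnerProductSpace.toDual ℝ H).symm (LinearMap.mkContinuous
      { toFun := fun u => ∫ t, (⟪u, Kf t⟫:ℝ) ∂P,
        map_add' := fun a b => by
          simp only [inner_add_left]
          exact integral_add (hInt a) (hInt b),
        map_smul' := fun r a => by
          simp only [real_inner_smul_left, RingHom.id_apply, smul_eq_mul]
          exact integral_const_mul r _ } (Real.sqrt R) hbd), fun u => ?_⟩
    exact InnerProductSpace.toDual_symm_apply
  have hμn : ‖μ‖ ^ 2 ≤ R := by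
    have h1 : (⟪μ, μ⟫:ℝ) = ∫ t, ⟪μ, Kf t⟫ ∂P := hμ μ
    have h2 : ‖∫ t, (⟪μ, Kf t⟫:ℝ) ∂P‖ ≤ (‖μ‖ * Real.sqrt R) * (P Set.univ).toReal :=
      norm_integral_le_of_norm_le_const (Filter.Eventually.of_forall (hbnd μ))
    simp only [measure_univ, ENNReal.toReal_one, mul_one] at h2
    have h3 : ‖μ‖ ^ 2 ≤ ‖μ‖ * Real.sqrt R := by
      rw [← real_inner_self_eq_norm_sq, h1]
      exact le_trans (le_abs_self _) h2
    nlinarith [Real.sq_sqrt hR0.le, Real.sqrt_nonneg R, norm_nonneg μ]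
  -- subspaces and projections
  let S : ℕ → Submodule ℝ H := fun n => Submodule.span ℝ (Set.range fun i : Fin n => Kf (pts i))
  let q : ℕ → H := fun n => (Submodule.orthogonalProjection (S n) μ : H)
  let V : ℕ → ℝ := fun n => ‖μ‖ ^ 2 - ‖q n‖ ^ 2
  have hVpyth : ∀ n, V n = ‖μ - q n‖ ^ 2 := fun n => by
    have := proj_pyth (S n) μ; simp only [V, q]; linarith
  have hV0 : ∀ n, 0 ≤ V n := fun n => (hVpyth n).symm ▸ sq_nonneg _
  have horth : ∀ n (z : H), z ∈ S n → (⟪μ - q n, z⟫ : ℝ) = 0 := fun n z hz =>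
    Submodule.starProjection_inner_eq_zero μ z hz
  have hSmono : ∀ n, S n ≤ S (n + 1) := by
    intro n
    apply Submodule.span_mono
    rintro _ ⟨i, rfl⟩
    exact ⟨i.castSucc, by simp⟩
  -- linear independence
  have hli : ∀ N : ℕ, LinearIndependent ℝ (fun i : Fin N => Kf (pts i)) := by
    intro N
    rw [Fintype.linearIndependent_iff]
    intro g hg
    by_contra hne
    push_neg at hne
    obtain ⟨i0, hi0⟩ := hne
    have hg0 : g ≠ 0 := fun h => hi0 (by rw [h]; rfl)
    have h := (hPD N).dotProduct_mulVec_pos hg0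
    rw [hMeq N, star_trivial, gram_quad, hg] at h
    simp at h
  have hvec : ∀ z : Cube d, (∫ t', k t' z ∂P) = (⟪μ, Kf z⟫ : ℝ) := by
    intro z
    rw [hμ (Kf z)]
    exact integral_congr_ae (Filter.Eventually.of_forall fun t => (hkinner z t))
  -- error representation at step N
  have herr : ∀ N : ℕ, LinearIndependent ℝ (fun i : Fin N => Kf (pts i)) →
      |(∫ t, φ f t ∂P)
          - ((fun i : Fin N => ∫ t', k t' (pts i) ∂P)
              ⬝ᵥ ((Matrix.of fun i j : Fin N => k (pts i) (pts j))⁻¹).mulVec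
                (fun i : Fin N => φ f (pts i)))|
        ≤ Real.sqrt (V N) * ‖f‖ := by
    intro N hliN
    have e1 : (fun i : Fin N => ∫ t', k t' (pts i) ∂P)
        = fun i : Fin N => (⟪μ, Kf (pts i)⟫:ℝ) := funext fun i => hvec (pts i)
    have e2 : (fun i : Fin N => φ f (pts i)) = fun i : Fin N => (⟪f, Kf (pts i)⟫:ℝ) :=
      funext fun i => (hrepro f (pts i)).symm
    have e3 : (∫ t, φ f t ∂P) = (⟪μ, f⟫:ℝ) := by
      rw [hμ f]
      exact integral_congr_ae (Filter.Eventually.of_forall fun t => (hrepro f t).symm)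
    rw [e1, e2, e3, hMeq N,
      gram_dot_eq_inner_proj (fun i : Fin N => Kf (pts i)) hliN μ f]
    set Pf : H :=
      (Submodule.orthogonalProjection (Submodule.span ℝ (Set.range fun i : Fin N => Kf (pts i))) f : H)
      with hPf
    have hz1 : (⟪q N, f - Pf⟫:ℝ) = 0 := by
      rw [real_inner_comm]
      exact Submodule.starProjection_inner_eq_zero f (q N) (Submodule.orthogonalProjection (S N) μ).2
    have h4 : (⟪μ, f⟫:ℝ) - ⟪μ, Pf⟫ = ⟪μ - q N, f - Pf⟫ := by
      have expand : (⟪μ - q N, f - Pf⟫:ℝ) = ⟪μ, f⟫ - ⟪μ, Pf⟫ - (⟪q N, f⟫ - ⟪q N, Pf⟫) := by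
        simp only [inner_sub_left, inner_sub_right]; ring
      have hz2 : (⟪q N, f⟫:ℝ) - ⟪q N, Pf⟫ = 0 := by rw [← inner_sub_right]; exact hz1
      rw [expand, hz2, sub_zero]
    rw [h4]
    refine (abs_real_inner_le_norm _ _).trans ?_
    have h5 : ‖μ - q N‖ = Real.sqrt (V N) := by
      rw [hVpyth N, Real.sqrt_sq (norm_nonneg _)]
    have h6 : ‖f - Pf‖ ≤ ‖f‖ := by
      have hp := proj_pyth (S N) f
      have h7 : ‖f - Pf‖ ^ 2 ≤ ‖f‖ ^ 2 := by
        nlinarith [sq_nonneg ‖(Submodule.orthogonalProjection (S N) f : H)‖]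
      have := Real.sqrt_le_sqrt h7
      rwa [Real.sqrt_sq (norm_nonneg _), Real.sqrt_sq (norm_nonneg _)] at this
    rw [h5]
    exact mul_le_mul_of_nonneg_left h6 (Real.sqrt_nonneg _)
  -- value of acquisition at selected point
  have hacq_pts : ∀ n : ℕ, seqAcq k P pts n (pts n) = ‖q (n + 1)‖ ^ 2 := by
    intro n
    have hfun2 : ∀ i : Fin (n + 1), (if (i:ℕ) < n then pts i else pts n) = pts i := by
      intro i
      by_cases h : (i:ℕ) < n
      · simp [h]
      · have hin : (i:ℕ) = n := by have := i.isLt; omega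
        simp [h, hin]
    unfold seqAcq
    simp only [hfun2]
    have e1 : (fun i : Fin (n+1) => ∫ t', k t' (pts i) ∂P)
        = fun i : Fin (n+1) => (⟪μ, Kf (pts i)⟫:ℝ) := funext fun i => hvec (pts i)
    rw [e1, hMeq (n+1),
      gram_dot_eq_inner_proj (fun i : Fin (n+1) => Kf (pts i)) (hli (n+1)) μ μ]
    have h0 : (⟪μ - q (n+1), q (n+1)⟫:ℝ) = 0 :=
      horth (n+1) _ (Submodule.orthogonalProjection (S (n+1)) μ).2
    have expand : (⟪μ - q (n+1), q (n+1)⟫:ℝ) = ⟪μ, q (n+1)⟫ - ⟪q (n+1), q (n+1)⟫ :=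
      inner_sub_left _ _ _
    have : (⟪μ, q (n+1)⟫:ℝ) = ⟪q (n+1), q (n+1)⟫ := by rw [expand] at h0; linarith
    rw [show ((Submodule.orthogonalProjection (Submodule.span ℝ
        (Set.range fun i : Fin (n+1) => Kf (pts i))) μ : H)) = q (n+1) from rfl]
    rw [this, real_inner_self_eq_norm_sq]
  -- greedy one-step decrease
  have hrec : ∀ n, 1 ≤ n → V (n + 1) ≤ V n - V n ^ 2 / R := by
    intro n hn
    obtain ⟨y, hy⟩ : ∃ y : Cube d, V n ≤ ⟪μ - q n, Kf y⟫ := by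
      by_contra hcon
      push_neg at hcon
      have hgint : (∫ t, (⟪μ - q n, Kf t⟫:ℝ) ∂P) = V n := by
        rw [← hμ (μ - q n)]
        have h0 : (⟪μ - q n, q n⟫:ℝ) = 0 := horth n (q n) (Submodule.orthogonalProjection (S n) μ).2
        have hcomm : (⟪μ, μ - q n⟫:ℝ) = ⟪μ - q n, μ⟫ := real_inner_comm _ _
        have hexp : (⟪μ - q n, μ⟫:ℝ) = ⟪μ - q n, μ - q n⟫ + ⟪μ - q n, q n⟫ := by
          rw [← inner_add_right, sub_add_cancel]
        rw [hcomm, hexp, h0, add_zero, real_inner_self_eq_norm_sq, hVpyth n]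
      have hhpos : ∀ t, (0:ℝ) < V n - ⟪μ - q n, Kf t⟫ := fun t => sub_pos.2 (hcon t)
      have hhint : Integrable (fun t => V n - (⟪μ - q n, Kf t⟫:ℝ)) P :=
        (integrable_const (V n)).sub (hInt (μ - q n))
      have hpos : (0:ℝ) < ∫ t, (V n - (⟪μ - q n, Kf t⟫:ℝ)) ∂P := by
        rw [integral_pos_iff_support_of_nonneg_ae
          (Filter.Eventually.of_forall fun t => (hhpos t).le) hhint]
        have hsup : Function.support (fun t => V n - (⟪μ - q n, Kf t⟫:ℝ)) = Set.univ :=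
          Set.eq_univ_of_forall fun t => (hhpos t).ne'
        rw [hsup]
        simp [measure_univ]
      rw [integral_sub (integrable_const _) (hInt _), integral_const, hgint] at hpos
      simp [measure_univ] at hpos
    by_cases hyS : Kf y ∈ S n
    · have h0 : (⟪μ - q n, Kf y⟫:ℝ) = 0 := horth n _ hyS
      have hVn0 : V n = 0 := le_antisymm (h0 ▸ hy) (hV0 n)
      have hmon : V (n + 1) ≤ V n := by
        rw [hVpyth (n+1), hVpyth n]
        exact proj_min (S (n+1)) μ (hSmono n (Submodule.orthogonalProjection (S n) μ).2)
      rw [hVn0] at hmon ⊢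
      simpa using hmon
    · set w : Fin (n+1) → H := Fin.snoc (fun i : Fin n => Kf (pts i)) (Kf y) with hw
      have hli' : LinearIndependent ℝ w := linearIndependent_fin_snoc.2 ⟨hli n, hyS⟩
      have hfun : ∀ i : Fin (n+1), Kf (if (i:ℕ) < n then pts i else y) = w i := by
        intro i
        refine Fin.lastCases ?_ ?_ i
        · simp [hw, Fin.snoc_last, Fin.val_last]
        · intro j
          simp [hw, Fin.snoc_castSucc, Fin.coe_castSucc, j.isLt]
      set Sw := Submodule.span ℝ (Set.range w) with hSw
      have hseq_y : seqAcq k P pts n y = ⟪μ, (Submodule.orthogonalProjection Sw μ : H)⟫ := by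
        unfold seqAcq
        have e1 : (fun i : Fin (n+1) => ∫ t', k t' (if (i:ℕ) < n then pts i else y) ∂P)
            = fun i => (⟪μ, w i⟫:ℝ) := funext fun i => by rw [hvec, hfun i]
        have e2 : (Matrix.of fun i j : Fin (n+1) =>
              k (if (i:ℕ) < n then pts i else y) (if (j:ℕ) < n then pts j else y))
            = Matrix.of fun i j => (⟪w i, w j⟫:ℝ) := by
          ext i j
          simp only [Matrix.of_apply]
          rw [hkinner, hfun, hfun, real_inner_comm]
        rw [e1, e2, gram_dot_eq_inner_proj w hli' μ μ]
      have hproj' : (⟪μ, (Submodule.orthogonalProjection Sw μ : H)⟫:ℝ)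
          = ‖(Submodule.orthogonalProjection Sw μ : H)‖ ^ 2 := by
        have h0 : (⟪μ - (Submodule.orthogonalProjection Sw μ : H), (Submodule.orthogonalProjection Sw μ : H)⟫:ℝ)
            = 0 := Submodule.starProjection_inner_eq_zero μ _ (Submodule.orthogonalProjection Sw μ).2
        have expand := inner_sub_left (𝕜 := ℝ) μ ((Submodule.orthogonalProjection Sw μ : H))
          ((Submodule.orthogonalProjection Sw μ : H))
        rw [expand] at h0
        rw [← real_inner_self_eq_norm_sq]
        linarith
      have hSsub : S n ≤ Sw := by
        apply Submodule.span_mono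
        rintro _ ⟨i, rfl⟩
        exact ⟨i.castSucc, by simp [hw]⟩
      have hKfyS' : Kf y ∈ Sw := Submodule.subset_span ⟨Fin.last n, by simp [hw]⟩
      set e : H := Kf y - (Submodule.orthogonalProjection (S n) (Kf y) : H) with he
      have hemem : e ∈ Sw :=
        Submodule.sub_mem _ hKfyS' (hSsub (Submodule.orthogonalProjection (S n) (Kf y)).2)
      have he2pos : (0:ℝ) < ‖e‖ ^ 2 := by
        rcases eq_or_ne e 0 with h | h
        · exfalso
          apply hyS
          have : Kf y = (Submodule.orthogonalProjection (S n) (Kf y) : H) := by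
            rwa [he, sub_eq_zero] at h
          rw [this]
          exact (Submodule.orthogonalProjection (S n) (Kf y)).2
        · exact pow_pos (norm_pos_iff.mpr h) 2
      have he2R : ‖e‖ ^ 2 ≤ R := by
        have hp := proj_pyth (S n) (Kf y)
        have h2 : ‖Kf y‖ ^ 2 ≤ R := (hKfn y).le.trans (hRx y)
        nlinarith [sq_nonneg ‖(Submodule.orthogonalProjection (S n) (Kf y) : H)‖]
      set g : ℝ := ⟪μ - q n, Kf y⟫ with hgdef
      have hge : (⟪μ - q n, e⟫:ℝ) = g := by
        rw [he, inner_sub_right, horth n _ (Submodule.orthogonalProjection (S n) (Kf y)).2, sub_zero]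
      set t : ℝ := g / ‖e‖ ^ 2 with ht
      set z : H := q n + t • e with hz
      have hzmem : z ∈ Sw :=
        Submodule.add_mem _ (hSsub (Submodule.orthogonalProjection (S n) μ).2)
          (Submodule.smul_mem _ _ hemem)
      have hdist : ‖μ - z‖ ^ 2 = V n - g ^ 2 / ‖e‖ ^ 2 := by
        have hmz : μ - z = (μ - q n) - t • e := by rw [hz]; abel
        have hexp : ‖(μ - q n) - t • e‖ ^ 2
            = ‖μ - q n‖ ^ 2 - 2 * ⟪μ - q n, t • e⟫ + ‖t • e‖ ^ 2 :=
          norm_sub_sq_real _ _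
        have hinner : (⟪μ - q n, t • e⟫:ℝ) = t * g := by
          rw [real_inner_smul_right, hge]
        have hns : ‖t • e‖ ^ 2 = t ^ 2 * ‖e‖ ^ 2 := by
          rw [norm_smul]
          simp [mul_pow, sq_abs]
        rw [hmz, hexp, hinner, hns, hVpyth n, ht]
        field_simp
        ring
      have hgR : g ^ 2 / R ≤ g ^ 2 / ‖e‖ ^ 2 :=
        div_le_div_of_nonneg_left (sq_nonneg g) he2pos he2R
      have hmin := proj_min Sw μ hzmem
      have hpyth := proj_pyth Sw μ
      have hVdef : V n = ‖μ‖ ^ 2 - ‖q n‖ ^ 2 := rfl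
      have hQ : ‖q n‖ ^ 2 + g ^ 2 / R ≤ ‖(Submodule.orthogonalProjection Sw μ : H)‖ ^ 2 := by
        linarith
      have hchain := hacq n hn y
      rw [hseq_y, hproj'] at hchain
      have hfin : V (n + 1) ≤ V n - g ^ 2 / R := by
        have hV1def : V (n + 1) = ‖μ‖ ^ 2 - ‖q (n + 1)‖ ^ 2 := rfl
        have hap := hacq_pts n
        linarith
      have hg2 : V n ^ 2 ≤ g ^ 2 := pow_le_pow_left₀ (hV0 n) hy 2
      have : V n ^ 2 / R ≤ g ^ 2 / R := by
        gcongr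
      linarith
  have hV1 : V 1 ≤ R := by
    have : (0:ℝ) ≤ ‖q 1‖ ^ 2 := sq_nonneg _
    simp only [V]; linarith
  have hVN : ∀ N, 1 ≤ N → V N ≤ R / N := seq_bound hR0 V (fun n _ => hV0 n) hV1 hrec
  refine ⟨Real.sqrt R, Real.sqrt_pos.2 hR0, fun N hN => ?_⟩
  refine (herr N (hli N)).trans ?_
  have hNpos : (0:ℝ) < (N:ℝ) := by exact_mod_cast hN
  have h1 : Real.sqrt (V N) ≤ Real.sqrt (R / N) := Real.sqrt_le_sqrt (hVN N hN)
  have h2 : Real.sqrt (R / N) = Real.sqrt R * (N:ℝ) ^ (-(1/2 : ℝ)) := by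
    rw [Real.sqrt_div hR0.le, Real.rpow_neg (Nat.cast_nonneg N), ← Real.sqrt_eq_rpow,
      div_eq_mul_inv]
  rw [h2] at h1
  calc Real.sqrt (V N) * ‖f‖ ≤ (Real.sqrt R * (N:ℝ) ^ (-(1/2 : ℝ))) * ‖f‖ :=
        mul_le_mul_of_nonneg_right h1 (norm_nonneg f)
    _ = _ := rfl
end
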